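/- arXiv:2411.02300 — 10 statements merged into one kernel-verified Lean document; each statement's English description precedes it below -/
import Mathlib

section
/- For any finite simple graphs G and H, the reconfiguration graph of the disjoint union G ∪ H is isomorphic to the Cartesian product R(G) □ R(H) of the reconfiguration graphs of G and H. -/
/-- `S` is a dominating set of `G`: every vertex is in `S` or adjacent to a vertex of `S`. -/
def IsDomSet {V : Type*} (G : SimpleGraph V) (S : Set V) : Prop :=
  ∀ v : V, v ∈ S ∨ ∃ u ∈ S, G.Adj v u

/-- `S` is a minimal dominating set of `G`. -/
def IsMinDomSet {V : Type*} (G : SimpleGraph V) (S : Set V) : Prop :=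
  IsDomSet G S ∧ ∀ v ∈ S, ¬ IsDomSet G (S \ {v})

/-- The expansion/contraction reconfiguration rule. -/
def ReconfigAdj {V : Type*} (G : SimpleGraph V) (M₁ M₂ : Set V) : Prop :=
  ∃ v : V, (M₂ \ M₁ = {v} ∧ M₁ \ M₂ ⊆ G.neighborSet v) ∨
           (M₁ \ M₂ = {v} ∧ M₂ \ M₁ ⊆ G.neighborSet v)

/-- The reconfiguration graph `R(G)` of minimal dominating sets of `G`. -/
def ReconfigGraph {V : Type*} (G : SimpleGraph V) :
    SimpleGraph {S : Set V // IsMinDomSet G S} where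
  Adj M₁ M₂ := M₁ ≠ M₂ ∧ ReconfigAdj G M₁.1 M₂.1
  symm := by
    constructor
    rintro M₁ M₂ ⟨hne, v, h⟩
    exact ⟨hne.symm, v, h.symm⟩
  loopless := by constructor; rintro M ⟨hne, _⟩; exact hne rfl

section Aux

variable {α β : Type*} {G : SimpleGraph α} {H : SimpleGraph β}

lemma domSum_iff {S : Set (α ⊕ β)} :
    IsDomSet (G ⊕g H) S ↔ IsDomSet G (Sum.inl ⁻¹' S) ∧ IsDomSet H (Sum.inr ⁻¹' S) := by
  constructor
  · intro h
    constructor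
    · intro a
      rcases h (Sum.inl a) with hm | ⟨u, hu, hadj⟩
      · exact Or.inl hm
      · cases u with
        | inl b => exact Or.inr ⟨b, hu, by simpa using hadj⟩
        | inr b => simp at hadj
    · intro a
      rcases h (Sum.inr a) with hm | ⟨u, hu, hadj⟩
      · exact Or.inl hm
      · cases u with
        | inl b => simp at hadj
        | inr b => exact Or.inr ⟨b, hu, by simpa using hadj⟩
  · rintro ⟨hG, hH⟩ v
    cases v with
    | inl a =>
      rcases hG a with hm | ⟨u, hu, hadj⟩
      · exact Or.inl hm
      · exact Or.inr ⟨Sum.inl u, hu, by simpa using hadj⟩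
    | inr a =>
      rcases hH a with hm | ⟨u, hu, hadj⟩
      · exact Or.inl hm
      · exact Or.inr ⟨Sum.inr u, hu, by simpa using hadj⟩

lemma minDomSum_iff {S : Set (α ⊕ β)} :
    IsMinDomSet (G ⊕g H) S ↔
      IsMinDomSet G (Sum.inl ⁻¹' S) ∧ IsMinDomSet H (Sum.inr ⁻¹' S) := by
  have hpreL : ∀ (a : α), Sum.inl ⁻¹' (S \ {Sum.inl a}) = (Sum.inl ⁻¹' S) \ {a} := by
    intro a; ext x; simp
  have hpreL' : ∀ (a : α), Sum.inr ⁻¹' (S \ {Sum.inl a}) = Sum.inr ⁻¹' S := by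
    intro a; ext x; simp
  have hpreR : ∀ (b : β), Sum.inr ⁻¹' (S \ {Sum.inr b}) = (Sum.inr ⁻¹' S) \ {b} := by
    intro b; ext x; simp
  have hpreR' : ∀ (b : β), Sum.inl ⁻¹' (S \ {Sum.inr b}) = Sum.inl ⁻¹' S := by
    intro b; ext x; simp
  constructor
  · rintro ⟨hdom, hmin⟩
    rw [domSum_iff] at hdom
    refine ⟨⟨hdom.1, ?_⟩, ⟨hdom.2, ?_⟩⟩
    · intro a ha hcon
      refine hmin (Sum.inl a) ha ?_
      rw [domSum_iff, hpreL, hpreL']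
      exact ⟨hcon, hdom.2⟩
    · intro b hb hcon
      refine hmin (Sum.inr b) hb ?_
      rw [domSum_iff, hpreR, hpreR']
      exact ⟨hdom.1, hcon⟩
  · rintro ⟨⟨hdG, hmG⟩, ⟨hdH, hmH⟩⟩
    refine ⟨domSum_iff.mpr ⟨hdG, hdH⟩, ?_⟩
    intro v hv hcon
    rw [domSum_iff] at hcon
    cases v with
    | inl a =>
      rw [hpreL, hpreL'] at hcon
      exact hmG a hv hcon.1
    | inr b =>
      rw [hpreR, hpreR'] at hcon
      exact hmH b hv hcon.2

lemma reconfigSum_iff {S T : Set (α ⊕ β)} :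
    ReconfigAdj (G ⊕g H) S T ↔
      (Sum.inr ⁻¹' S = Sum.inr ⁻¹' T ∧ ReconfigAdj G (Sum.inl ⁻¹' S) (Sum.inl ⁻¹' T)) ∨
      (Sum.inl ⁻¹' S = Sum.inl ⁻¹' T ∧ ReconfigAdj H (Sum.inr ⁻¹' S) (Sum.inr ⁻¹' T)) := by
  constructor
  · rintro ⟨v, h | h⟩
    · -- T \ S = {v}
      cases v with
      | inl a =>
        refine Or.inl ⟨?_, a, Or.inl ⟨?_, ?_⟩⟩
        · ext x
          have h1 : Sum.inr x ∈ T \ S ↔ Sum.inr x ∈ ({Sum.inl a} : Set (α ⊕ β)) := by rw [h.1]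
          have h2 := @h.2 (Sum.inr x)
          simp only [Set.mem_diff, Set.mem_singleton_iff] at h1 h2
          simp only [Set.mem_preimage]
          constructor
          · intro hx
            by_contra hxt
            simp [SimpleGraph.neighborSet, hx, hxt] at h2
          · intro hx
            by_contra hxs
            simp [hx, hxs] at h1
        · ext x
          have h1 : Sum.inl x ∈ T \ S ↔ Sum.inl x ∈ ({Sum.inl a} : Set (α ⊕ β)) := by rw [h.1]
          simpa using h1
        · intro x hx
          have := @h.2 (Sum.inl x) (by simpa using hx)
          simpa [SimpleGraph.neighborSet] using this
      | inr b =>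
        refine Or.inr ⟨?_, b, Or.inl ⟨?_, ?_⟩⟩
        · ext x
          have h1 : Sum.inl x ∈ T \ S ↔ Sum.inl x ∈ ({Sum.inr b} : Set (α ⊕ β)) := by rw [h.1]
          have h2 := @h.2 (Sum.inl x)
          simp only [Set.mem_diff, Set.mem_singleton_iff] at h1 h2
          simp only [Set.mem_preimage]
          constructor
          · intro hx
            by_contra hxt
            simp [SimpleGraph.neighborSet, hx, hxt] at h2
          · intro hx
            by_contra hxs
            simp [hx, hxs] at h1
        · ext x
          have h1 : Sum.inr x ∈ T \ S ↔ Sum.inr x ∈ ({Sum.inr b} : Set (α ⊕ β)) := by rw [h.1]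
          simpa using h1
        · intro x hx
          have := @h.2 (Sum.inr x) (by simpa using hx)
          simpa [SimpleGraph.neighborSet] using this
    · -- S \ T = {v}
      cases v with
      | inl a =>
        refine Or.inl ⟨?_, a, Or.inr ⟨?_, ?_⟩⟩
        · ext x
          have h1 : Sum.inr x ∈ S \ T ↔ Sum.inr x ∈ ({Sum.inl a} : Set (α ⊕ β)) := by rw [h.1]
          have h2 := @h.2 (Sum.inr x)
          simp only [Set.mem_diff, Set.mem_singleton_iff] at h1 h2
          simp only [Set.mem_preimage]
          constructor
          · intro hx
            by_contra hxt
            simp [hx, hxt] at h1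
          · intro hx
            by_contra hxs
            simp [SimpleGraph.neighborSet, hx, hxs] at h2
        · ext x
          have h1 : Sum.inl x ∈ S \ T ↔ Sum.inl x ∈ ({Sum.inl a} : Set (α ⊕ β)) := by rw [h.1]
          simpa using h1
        · intro x hx
          have := @h.2 (Sum.inl x) (by simpa using hx)
          simpa [SimpleGraph.neighborSet] using this
      | inr b =>
        refine Or.inr ⟨?_, b, Or.inr ⟨?_, ?_⟩⟩
        · ext x
          have h1 : Sum.inl x ∈ S \ T ↔ Sum.inl x ∈ ({Sum.inr b} : Set (α ⊕ β)) := by rw [h.1]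
          have h2 := @h.2 (Sum.inl x)
          simp only [Set.mem_diff, Set.mem_singleton_iff] at h1 h2
          simp only [Set.mem_preimage]
          constructor
          · intro hx
            by_contra hxt
            simp [hx, hxt] at h1
          · intro hx
            by_contra hxs
            simp [SimpleGraph.neighborSet, hx, hxs] at h2
        · ext x
          have h1 : Sum.inr x ∈ S \ T ↔ Sum.inr x ∈ ({Sum.inr b} : Set (α ⊕ β)) := by rw [h.1]
          simpa using h1
        · intro x hx
          have := @h.2 (Sum.inr x) (by simpa using hx)
          simpa [SimpleGraph.neighborSet] using this
  · rintro (⟨hR, a, hG | hG⟩ | ⟨hL, b, hH | hH⟩)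
    · refine ⟨Sum.inl a, Or.inl ⟨?_, ?_⟩⟩
      · ext x
        cases x with
        | inl c =>
          have : c ∈ (Sum.inl ⁻¹' T) \ (Sum.inl ⁻¹' S) ↔ c ∈ ({a} : Set α) := by rw [hG.1]
          simpa using this
        | inr c =>
          have h1 : c ∈ (Sum.inr ⁻¹' S) ↔ c ∈ (Sum.inr ⁻¹' T) := by rw [hR]
          simp only [Set.mem_preimage] at h1
          simp [h1]
      · rintro x ⟨hxs, hxt⟩
        cases x with
        | inl c =>
          have : c ∈ G.neighborSet a := hG.2 ⟨hxs, hxt⟩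
          simpa [SimpleGraph.neighborSet] using this
        | inr c =>
          have h1 : c ∈ (Sum.inr ⁻¹' S) ↔ c ∈ (Sum.inr ⁻¹' T) := by rw [hR]
          simp only [Set.mem_preimage] at h1
          exact absurd (h1.mp hxs) hxt
    · refine ⟨Sum.inl a, Or.inr ⟨?_, ?_⟩⟩
      · ext x
        cases x with
        | inl c =>
          have : c ∈ (Sum.inl ⁻¹' S) \ (Sum.inl ⁻¹' T) ↔ c ∈ ({a} : Set α) := by rw [hG.1]
          simpa using this
        | inr c =>
          have h1 : c ∈ (Sum.inr ⁻¹' S) ↔ c ∈ (Sum.inr ⁻¹' T) := by rw [hR]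
          simp only [Set.mem_preimage] at h1
          simp [h1]
      · rintro x ⟨hxt, hxs⟩
        cases x with
        | inl c =>
          have : c ∈ G.neighborSet a := hG.2 ⟨hxt, hxs⟩
          simpa [SimpleGraph.neighborSet] using this
        | inr c =>
          have h1 : c ∈ (Sum.inr ⁻¹' S) ↔ c ∈ (Sum.inr ⁻¹' T) := by rw [hR]
          simp only [Set.mem_preimage] at h1
          exact absurd (h1.mpr hxt) hxs
    · refine ⟨Sum.inr b, Or.inl ⟨?_, ?_⟩⟩
      · ext x
        cases x with
        | inl c =>
          have h1 : c ∈ (Sum.inl ⁻¹' S) ↔ c ∈ (Sum.inl ⁻¹' T) := by rw [hL]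
          simp only [Set.mem_preimage] at h1
          simp [h1]
        | inr c =>
          have : c ∈ (Sum.inr ⁻¹' T) \ (Sum.inr ⁻¹' S) ↔ c ∈ ({b} : Set β) := by rw [hH.1]
          simpa using this
      · rintro x ⟨hxs, hxt⟩
        cases x with
        | inl c =>
          have h1 : c ∈ (Sum.inl ⁻¹' S) ↔ c ∈ (Sum.inl ⁻¹' T) := by rw [hL]
          simp only [Set.mem_preimage] at h1
          exact absurd (h1.mp hxs) hxt
        | inr c =>
          have : c ∈ H.neighborSet b := hH.2 ⟨hxs, hxt⟩
          simpa [SimpleGraph.neighborSet] using this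
    · refine ⟨Sum.inr b, Or.inr ⟨?_, ?_⟩⟩
      · ext x
        cases x with
        | inl c =>
          have h1 : c ∈ (Sum.inl ⁻¹' S) ↔ c ∈ (Sum.inl ⁻¹' T) := by rw [hL]
          simp only [Set.mem_preimage] at h1
          simp [h1]
        | inr c =>
          have : c ∈ (Sum.inr ⁻¹' S) \ (Sum.inr ⁻¹' T) ↔ c ∈ ({b} : Set β) := by rw [hH.1]
          simpa using this
      · rintro x ⟨hxt, hxs⟩
        cases x with
        | inl c =>
          have h1 : c ∈ (Sum.inl ⁻¹' S) ↔ c ∈ (Sum.inl ⁻¹' T) := by rw [hL]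
          simp only [Set.mem_preimage] at h1
          exact absurd (h1.mpr hxt) hxs
        | inr c =>
          have : c ∈ H.neighborSet b := hH.2 ⟨hxt, hxs⟩
          simpa [SimpleGraph.neighborSet] using this

end Aux

/-- The reconfiguration graph of a disjoint union is the Cartesian (box) product of the
reconfiguration graphs. -/
theorem stmt2 {α β : Type*} [Fintype α] [Fintype β] (G : SimpleGraph α) (H : SimpleGraph β) :
    Nonempty (ReconfigGraph (G ⊕g H) ≃g (ReconfigGraph G □ ReconfigGraph H)) := by
  refine ⟨⟨⟨?_, ?_, ?_, ?_⟩, ?_⟩⟩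
  · exact fun S => (⟨Sum.inl ⁻¹' S.1, (minDomSum_iff.mp S.2).1⟩,
      ⟨Sum.inr ⁻¹' S.1, (minDomSum_iff.mp S.2).2⟩)
  · exact fun P => ⟨Sum.inl '' P.1.1 ∪ Sum.inr '' P.2.1, by
      refine minDomSum_iff.mpr ⟨?_, ?_⟩
      · have : Sum.inl ⁻¹' (Sum.inl '' P.1.1 ∪ Sum.inr '' P.2.1) = P.1.1 := by
          ext x; simp
        rw [this]; exact P.1.2
      · have : Sum.inr ⁻¹' (Sum.inl '' P.1.1 ∪ Sum.inr '' P.2.1) = P.2.1 := by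
          ext x; simp
        rw [this]; exact P.2.2⟩
  · intro S
    ext x
    cases x <;> simp
  · intro P
    refine Prod.ext (Subtype.ext ?_) (Subtype.ext ?_) <;> · ext x; simp
  · intro S T
    simp only [Equiv.coe_fn_mk, SimpleGraph.boxProd_adj]
    show ((ReconfigGraph G).Adj _ _ ∧ _) ∨ ((ReconfigGraph H).Adj _ _ ∧ _) ↔
      (ReconfigGraph (G ⊕g H)).Adj S T
    simp only [ReconfigGraph, Subtype.ext_iff, ne_eq]
    rw [reconfigSum_iff]
    constructor
    · rintro (⟨⟨hne, hadj⟩, heq⟩ | ⟨⟨hne, hadj⟩, heq⟩)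
      · refine ⟨?_, Or.inl ⟨heq, hadj⟩⟩
        intro hST
        exact hne (by rw [hST])
      · refine ⟨?_, Or.inr ⟨heq, hadj⟩⟩
        intro hST
        exact hne (by rw [hST])
    · rintro ⟨hne, (⟨heq, hadj⟩ | ⟨heq, hadj⟩)⟩
      · refine Or.inl ⟨⟨?_, hadj⟩, heq⟩
        intro hL
        refine hne ?_
        ext x
        cases x with
        | inl c =>
          have : c ∈ (Sum.inl ⁻¹' S.1) ↔ c ∈ (Sum.inl ⁻¹' T.1) := by rw [hL]
          simpa using this
        | inr c =>
          have : c ∈ (Sum.inr ⁻¹' S.1) ↔ c ∈ (Sum.inr ⁻¹' T.1) := by rw [heq]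
          simpa using this
      · refine Or.inr ⟨⟨?_, hadj⟩, heq⟩
        intro hR
        refine hne ?_
        ext x
        cases x with
        | inl c =>
          have : c ∈ (Sum.inl ⁻¹' S.1) ↔ c ∈ (Sum.inl ⁻¹' T.1) := by rw [heq]
          simpa using this
        | inr c =>
          have : c ∈ (Sum.inr ⁻¹' S.1) ↔ c ∈ (Sum.inr ⁻¹' T.1) := by rw [hR]
          simpa using this
end

section
/- For integers m, n ≥ 2, the reconfiguration graph R(K_{m,n}) of the complete bipartite graph K_{m,n} is isomorphic to the complete bipartite graph K_{2,mn}. -/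
namespace Stmt6Aux

variable {m n : ℕ}

abbrev GG (m n : ℕ) := completeBipartiteGraph (Fin m) (Fin n)

lemma dom_left (hm : 0 < m) : IsDomSet (GG m n) (Set.range Sum.inl) := by
  rintro (a | b)
  · exact Or.inl ⟨a, rfl⟩
  · exact Or.inr ⟨Sum.inl ⟨0, hm⟩, ⟨_, rfl⟩, by simp⟩

lemma dom_right (hn : 0 < n) : IsDomSet (GG m n) (Set.range Sum.inr) := by
  rintro (a | b)
  · exact Or.inr ⟨Sum.inr ⟨0, hn⟩, ⟨_, rfl⟩, by simp⟩
  · exact Or.inl ⟨b, rfl⟩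

lemma min_left (hm : 0 < m) : IsMinDomSet (GG m n) (Set.range Sum.inl) := by
  refine ⟨dom_left hm, ?_⟩
  rintro v ⟨a, rfl⟩ hdom
  rcases hdom (Sum.inl a) with h | ⟨u, hu, hadj⟩
  · exact h.2 rfl
  · obtain ⟨a', rfl⟩ := hu.1
    simp at hadj

lemma min_right (hn : 0 < n) : IsMinDomSet (GG m n) (Set.range Sum.inr) := by
  refine ⟨dom_right hn, ?_⟩
  rintro v ⟨b, rfl⟩ hdom
  rcases hdom (Sum.inr b) with h | ⟨u, hu, hadj⟩
  · exact h.2 rfl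
  · obtain ⟨b', rfl⟩ := hu.1
    simp at hadj

lemma pair_dom (a : Fin m) (b : Fin n) :
    IsDomSet (GG m n) {Sum.inl a, Sum.inr b} := by
  rintro (c | c)
  · exact Or.inr ⟨Sum.inr b, Or.inr rfl, by simp⟩
  · exact Or.inr ⟨Sum.inl a, Or.inl rfl, by simp⟩

lemma min_pair (hm : 2 ≤ m) (hn : 2 ≤ n) (a : Fin m) (b : Fin n) :
    IsMinDomSet (GG m n) {Sum.inl a, Sum.inr b} := by
  have : Nontrivial (Fin m) := Fin.nontrivial_iff_two_le.mpr hm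
  have : Nontrivial (Fin n) := Fin.nontrivial_iff_two_le.mpr hn
  refine ⟨pair_dom a b, ?_⟩
  rintro v hv hdom
  rcases hv with rfl | rfl
  · obtain ⟨b', hb'⟩ := exists_ne b
    rcases hdom (Sum.inr b') with h | ⟨u, hu, hadj⟩
    · rcases h.1 with h1 | h1
      · exact Sum.inr_ne_inl h1
      · exact hb' (Sum.inr.inj h1)
    · rcases hu.1 with h1 | h1
      · exact hu.2 h1
      · subst h1; simp at hadj
  · obtain ⟨a', ha'⟩ := exists_ne a
    rcases hdom (Sum.inl a') with h | ⟨u, hu, hadj⟩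
    · rcases h.1 with h1 | h1
      · exact ha' (Sum.inl.inj h1)
      · exact Sum.inl_ne_inr h1
    · rcases hu.1 with h1 | h1
      · subst h1; simp at hadj
      · exact hu.2 h1

lemma min_char (hm : 0 < m) {S : Set (Fin m ⊕ Fin n)} (hS : IsMinDomSet (GG m n) S) :
    S = Set.range Sum.inl ∨ S = Set.range Sum.inr ∨
      ∃ a b, S = {Sum.inl a, Sum.inr b} := by
  obtain ⟨hdom, hmin⟩ := hS
  by_cases hL : ∃ a, Sum.inl a ∈ S
  · by_cases hR : ∃ b, Sum.inr b ∈ S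
    · obtain ⟨a, ha⟩ := hL; obtain ⟨b, hb⟩ := hR
      refine Or.inr (Or.inr ⟨a, b, ?_⟩)
      refine Set.Subset.antisymm ?_ ?_
      · intro x hx
        by_contra hxp
        refine hmin x hx ?_
        have hane : Sum.inl a ≠ x := fun h => hxp (h ▸ Or.inl rfl)
        have hbne : Sum.inr b ≠ x := fun h => hxp (h ▸ Or.inr rfl)
        rintro (c | c)
        · exact Or.inr ⟨Sum.inr b, ⟨hb, hbne⟩, by simp⟩
        · exact Or.inr ⟨Sum.inl a, ⟨ha, hane⟩, by simp⟩
      · rintro x (rfl | rfl) <;> assumption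
  
    · refine Or.inl (Set.Subset.antisymm ?_ ?_)
      · rintro (a | b) hx
        · exact ⟨a, rfl⟩
        · exact absurd ⟨b, hx⟩ hR
      · rintro x ⟨a, rfl⟩
        rcases hdom (Sum.inl a) with h | ⟨u, hu, hadj⟩
        · exact h
        · rcases u with a' | b'
          · simp at hadj
          · exact absurd ⟨b', hu⟩ hR
  · by_cases hR : ∃ b, Sum.inr b ∈ S
    · refine Or.inr (Or.inl (Set.Subset.antisymm ?_ ?_))
      · rintro (a | b) hx
        · exact absurd ⟨a, hx⟩ hL
        · exact ⟨b, rfl⟩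
      · rintro x ⟨b, rfl⟩
        rcases hdom (Sum.inr b) with h | ⟨u, hu, hadj⟩
        · exact h
        · rcases u with a' | b'
          · exact absurd ⟨a', hu⟩ hL
          · simp at hadj
    · exfalso
      rcases hdom (Sum.inl ⟨0, hm⟩) with h | ⟨u, hu, hadj⟩
      · exact hL ⟨_, h⟩
      · rcases u with a' | b'
        · simp at hadj
        · exact hR ⟨b', hu⟩

lemma adj_left_pair (a : Fin m) (b : Fin n) :
    ReconfigAdj (GG m n) (Set.range Sum.inl) {Sum.inl a, Sum.inr b} := by
  refine ⟨Sum.inr b, Or.inl ⟨?_, ?_⟩⟩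
  · ext x
    constructor
    · rintro ⟨rfl | rfl, hx⟩
      · exact absurd ⟨a, rfl⟩ hx
      · rfl
    · rintro rfl
      exact ⟨Or.inr rfl, by rintro ⟨c, h⟩; exact Sum.inl_ne_inr h⟩
  · rintro x ⟨⟨c, rfl⟩, _⟩
    simp [SimpleGraph.mem_neighborSet]

lemma adj_right_pair (a : Fin m) (b : Fin n) :
    ReconfigAdj (GG m n) (Set.range Sum.inr) {Sum.inl a, Sum.inr b} := by
  refine ⟨Sum.inl a, Or.inl ⟨?_, ?_⟩⟩
  · ext x
    constructor
    · rintro ⟨rfl | rfl, hx⟩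
      · rfl
      · exact absurd ⟨b, rfl⟩ hx
    · rintro rfl
      exact ⟨Or.inl rfl, by rintro ⟨c, h⟩; exact Sum.inr_ne_inl h⟩
  · rintro x ⟨⟨c, rfl⟩, _⟩
    simp [SimpleGraph.mem_neighborSet]

lemma not_mem_range_inl (b : Fin n) :
    Sum.inr b ∉ Set.range (Sum.inl : Fin m → Fin m ⊕ Fin n) := by
  rintro ⟨c, h⟩; exact Sum.inl_ne_inr h

lemma not_mem_range_inr (a : Fin m) :
    Sum.inl a ∉ Set.range (Sum.inr : Fin n → Fin m ⊕ Fin n) := by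
  rintro ⟨c, h⟩; exact Sum.inr_ne_inl h

lemma not_adj_LR (hm : 2 ≤ m) (hn : 2 ≤ n) :
    ¬ ReconfigAdj (GG m n) (Set.range Sum.inl) (Set.range Sum.inr) := by
  have : Nontrivial (Fin m) := Fin.nontrivial_iff_two_le.mpr hm
  have : Nontrivial (Fin n) := Fin.nontrivial_iff_two_le.mpr hn
  obtain ⟨a, a', haa'⟩ := exists_pair_ne (Fin m)
  obtain ⟨b, b', hbb'⟩ := exists_pair_ne (Fin n)
  rintro ⟨v, ⟨h1, _⟩ | ⟨h1, _⟩⟩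
  · have e1 : Sum.inr b ∈ Set.range (Sum.inr : Fin n → Fin m ⊕ Fin n) \ Set.range Sum.inl :=
      ⟨⟨b, rfl⟩, not_mem_range_inl b⟩
    have e2 : Sum.inr b' ∈ Set.range (Sum.inr : Fin n → Fin m ⊕ Fin n) \ Set.range Sum.inl :=
      ⟨⟨b', rfl⟩, not_mem_range_inl b'⟩
    rw [h1] at e1 e2
    exact hbb' (Sum.inr.inj (e1.trans e2.symm))
  · have e1 : Sum.inl a ∈ Set.range (Sum.inl : Fin m → Fin m ⊕ Fin n) \ Set.range Sum.inr :=
      ⟨⟨a, rfl⟩, not_mem_range_inr a⟩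
    have e2 : Sum.inl a' ∈ Set.range (Sum.inl : Fin m → Fin m ⊕ Fin n) \ Set.range Sum.inr :=
      ⟨⟨a', rfl⟩, not_mem_range_inr a'⟩
    rw [h1] at e1 e2
    exact haa' (Sum.inl.inj (e1.trans e2.symm))

lemma not_adj_pairs_aux {a a' : Fin m} {b b' : Fin n}
    (hne : (a, b) ≠ (a', b')) (v : Fin m ⊕ Fin n)
    (h1 : ({Sum.inl a', Sum.inr b'} : Set (Fin m ⊕ Fin n)) \ {Sum.inl a, Sum.inr b} = {v})
    (h2 : ({Sum.inl a, Sum.inr b} : Set (Fin m ⊕ Fin n)) \ {Sum.inl a', Sum.inr b'} ⊆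
      (GG m n).neighborSet v) : False := by
  by_cases haa : a = a'
  · subst haa
    have hbb : b ≠ b' := fun h => hne (by rw [h])
    have e1 : Sum.inr b' ∈ ({Sum.inl a, Sum.inr b'} : Set (Fin m ⊕ Fin n)) \ {Sum.inl a, Sum.inr b} :=
      ⟨Or.inr rfl, by rintro (h | h); exact Sum.inr_ne_inl h; exact hbb (Sum.inr.inj h).symm⟩
    rw [h1] at e1
    have e2 : Sum.inr b ∈ ({Sum.inl a, Sum.inr b} : Set (Fin m ⊕ Fin n)) \ {Sum.inl a, Sum.inr b'} :=
      ⟨Or.inr rfl, by rintro (h | h); exact Sum.inr_ne_inl h; exact hbb (Sum.inr.inj h)⟩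
    have := h2 e2
    rw [← e1] at this
    simp [SimpleGraph.mem_neighborSet] at this
  · have e1 : Sum.inl a' ∈ ({Sum.inl a', Sum.inr b'} : Set (Fin m ⊕ Fin n)) \ {Sum.inl a, Sum.inr b} :=
      ⟨Or.inl rfl, by rintro (h | h); exact haa (Sum.inl.inj h).symm; exact Sum.inl_ne_inr h⟩
    rw [h1] at e1
    have e2 : Sum.inl a ∈ ({Sum.inl a, Sum.inr b} : Set (Fin m ⊕ Fin n)) \ {Sum.inl a', Sum.inr b'} :=
      ⟨Or.inl rfl, by rintro (h | h); exact haa (Sum.inl.inj h); exact Sum.inl_ne_inr h⟩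
    have := h2 e2
    rw [← e1] at this
    simp [SimpleGraph.mem_neighborSet] at this

lemma not_adj_pairs {a a' : Fin m} {b b' : Fin n} (hne : (a, b) ≠ (a', b')) :
    ¬ ReconfigAdj (GG m n) {Sum.inl a, Sum.inr b} {Sum.inl a', Sum.inr b'} := by
  rintro ⟨v, ⟨h1, h2⟩ | ⟨h1, h2⟩⟩
  · exact not_adj_pairs_aux hne v h1 h2
  · exact not_adj_pairs_aux (Ne.symm hne) v h1 h2

lemma pair_eq_iff {a a' : Fin m} {b b' : Fin n} :
    ({Sum.inl a, Sum.inr b} : Set (Fin m ⊕ Fin n)) = {Sum.inl a', Sum.inr b'} ↔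
      a = a' ∧ b = b' := by
  constructor
  · intro h
    have h1 : Sum.inl a ∈ ({Sum.inl a', Sum.inr b'} : Set (Fin m ⊕ Fin n)) := h ▸ Or.inl rfl
    have h2 : Sum.inr b ∈ ({Sum.inl a', Sum.inr b'} : Set (Fin m ⊕ Fin n)) := h ▸ Or.inr rfl
    constructor
    · rcases h1 with h1 | h1
      · exact Sum.inl.inj h1
      · exact absurd h1 (Sum.inl_ne_inr)
    · rcases h2 with h2 | h2
      · exact absurd h2 (Sum.inr_ne_inl)
      · exact Sum.inr.inj h2
  · rintro ⟨rfl, rfl⟩; rfl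

lemma left_ne_pair (a : Fin m) (b : Fin n) :
    Set.range (Sum.inl : Fin m → Fin m ⊕ Fin n) ≠ {Sum.inl a, Sum.inr b} := by
  intro h
  have : Sum.inr b ∈ Set.range (Sum.inl : Fin m → Fin m ⊕ Fin n) := by
    rw [h]; exact Or.inr rfl
  exact not_mem_range_inl b this

lemma right_ne_pair (a : Fin m) (b : Fin n) :
    Set.range (Sum.inr : Fin n → Fin m ⊕ Fin n) ≠ {Sum.inl a, Sum.inr b} := by
  intro h
  have : Sum.inl a ∈ Set.range (Sum.inr : Fin n → Fin m ⊕ Fin n) := by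
    rw [h]; exact Or.inl rfl
  exact not_mem_range_inr a this

lemma left_ne_right (hm : 0 < m) :
    Set.range (Sum.inl : Fin m → Fin m ⊕ Fin n) ≠ Set.range Sum.inr := by
  intro h
  have : Sum.inl (⟨0, hm⟩ : Fin m) ∈ Set.range (Sum.inr : Fin n → Fin m ⊕ Fin n) := by
    rw [← h]; exact ⟨_, rfl⟩
  exact not_mem_range_inr _ this


def fmap (m n : ℕ) (hm : 2 ≤ m) (hn : 2 ≤ n) :
    Fin 2 ⊕ Fin (m * n) → {S : Set (Fin m ⊕ Fin n) // IsMinDomSet (GG m n) S} := fun x =>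
  match x with
  | .inl i =>
      if i = 0 then ⟨Set.range Sum.inl, min_left (by omega)⟩
      else ⟨Set.range Sum.inr, min_right (by omega)⟩
  | .inr k => ⟨{Sum.inl (finProdFinEquiv.symm k).1, Sum.inr (finProdFinEquiv.symm k).2},
      min_pair hm hn _ _⟩

variable {hm : 2 ≤ m} {hn : 2 ≤ n}

lemma fmap_val0 : (fmap m n hm hn (Sum.inl 0)).1 = Set.range Sum.inl := by
  simp [fmap]

lemma fmap_val1 : (fmap m n hm hn (Sum.inl 1)).1 = Set.range Sum.inr := by
  simp [fmap]

lemma fmap_valr (k : Fin (m * n)) :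
    (fmap m n hm hn (Sum.inr k)).1 =
      {Sum.inl (finProdFinEquiv.symm k).1, Sum.inr (finProdFinEquiv.symm k).2} := rfl

lemma fin2_cases (i : Fin 2) : i = 0 ∨ i = 1 := by omega

lemma fmap_inj : Function.Injective (fmap m n hm hn) := by
  rintro (i | k) (j | k') h
  · rcases fin2_cases i with rfl | rfl <;> rcases fin2_cases j with rfl | rfl
    · rfl
    · have := congrArg Subtype.val h
      rw [fmap_val0, fmap_val1] at this
      exact absurd this (left_ne_right (by omega))
    · have := congrArg Subtype.val h
      rw [fmap_val0, fmap_val1] at this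
      exact absurd this.symm (left_ne_right (by omega))
    · rfl
  · have := congrArg Subtype.val h
    rw [fmap_valr] at this
    rcases fin2_cases i with rfl | rfl
    · rw [fmap_val0] at this
      exact absurd this (left_ne_pair _ _)
    · rw [fmap_val1] at this
      exact absurd this (right_ne_pair _ _)
  · have := congrArg Subtype.val h
    rw [fmap_valr] at this
    rcases fin2_cases j with rfl | rfl
    · rw [fmap_val0] at this
      exact absurd this.symm (left_ne_pair _ _)
    · rw [fmap_val1] at this
      exact absurd this.symm (right_ne_pair _ _)
  · have := congrArg Subtype.val h
    rw [fmap_valr, fmap_valr] at this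
    obtain ⟨h1, h2⟩ := pair_eq_iff.mp this
    have : (finProdFinEquiv.symm k : Fin m × Fin n) = finProdFinEquiv.symm k' :=
      Prod.ext h1 h2
    exact congrArg Sum.inr (finProdFinEquiv.symm.injective this)

lemma fmap_surj : Function.Surjective (fmap m n hm hn) := by
  rintro ⟨S, hS⟩
  rcases min_char (by omega) hS with h | h | ⟨a, b, h⟩
  · exact ⟨Sum.inl 0, Subtype.ext (by rw [fmap_val0]; exact h.symm)⟩
  · exact ⟨Sum.inl 1, Subtype.ext (by rw [fmap_val1]; exact h.symm)⟩
  · refine ⟨Sum.inr (finProdFinEquiv (a, b)), Subtype.ext ?_⟩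
    rw [fmap_valr, Equiv.symm_apply_apply]
    exact h.symm

lemma radj_lr (i : Fin 2) (k : Fin (m * n)) :
    (ReconfigGraph (GG m n)).Adj (fmap m n hm hn (Sum.inl i)) (fmap m n hm hn (Sum.inr k)) := by
  constructor
  · intro h
    have := congrArg Subtype.val h
    rw [fmap_valr] at this
    rcases fin2_cases i with rfl | rfl
    · rw [fmap_val0] at this; exact left_ne_pair _ _ this
    · rw [fmap_val1] at this; exact right_ne_pair _ _ this
  · show ReconfigAdj _ _ _
    rw [fmap_valr]
    rcases fin2_cases i with rfl | rfl
    · rw [fmap_val0]; exact adj_left_pair _ _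
    · rw [fmap_val1]; exact adj_right_pair _ _

lemma adj_iff (hm : 2 ≤ m) (hn : 2 ≤ n) (x y : Fin 2 ⊕ Fin (m * n)) :
    (ReconfigGraph (GG m n)).Adj (fmap m n hm hn x) (fmap m n hm hn y) ↔
      (completeBipartiteGraph (Fin 2) (Fin (m * n))).Adj x y := by
  rcases x with i | k <;> rcases y with j | k'
  · refine iff_of_false ?_ (by simp)
    rintro ⟨hne, v, hv⟩
    rcases fin2_cases i with rfl | rfl <;> rcases fin2_cases j with rfl | rfl
    · exact hne rfl
    · rw [fmap_val0, fmap_val1] at hv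
      exact not_adj_LR hm hn ⟨v, hv⟩
    · rw [fmap_val1, fmap_val0] at hv
      exact not_adj_LR hm hn ⟨v, hv.symm⟩
    · exact hne rfl
  · exact iff_of_true (radj_lr i k') (by simp)
  · exact iff_of_true ((ReconfigGraph (GG m n)).adj_symm (radj_lr j k)) (by simp)
  · refine iff_of_false ?_ (by simp)
    rintro ⟨hne, hadj⟩
    by_cases hkk : k = k'
    · exact hne (by rw [hkk])
    · rw [show ((fmap m n hm hn (Sum.inr k)) : Set (Fin m ⊕ Fin n)) =
          {Sum.inl (finProdFinEquiv.symm k).1, Sum.inr (finProdFinEquiv.symm k).2} from rfl,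
        show ((fmap m n hm hn (Sum.inr k')) : Set (Fin m ⊕ Fin n)) =
          {Sum.inl (finProdFinEquiv.symm k').1, Sum.inr (finProdFinEquiv.symm k').2} from rfl]
        at hadj
      refine not_adj_pairs ?_ hadj
      intro hp
      refine hkk (finProdFinEquiv.symm.injective ?_)
      exact Prod.ext (congrArg Prod.fst hp) (congrArg Prod.snd hp)

end Stmt6Aux

open Stmt6Aux in
/-- R(K_{m,n}) is isomorphic to K_{2,mn} for m, n ≥ 2. -/
theorem stmt6 (m n : ℕ) (hm : 2 ≤ m) (hn : 2 ≤ n) :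
    Nonempty (ReconfigGraph (completeBipartiteGraph (Fin m) (Fin n)) ≃g
      completeBipartiteGraph (Fin 2) (Fin (m * n))) := by
  refine ⟨SimpleGraph.Iso.symm
    ⟨Equiv.ofBijective (fmap m n hm hn) ⟨fmap_inj, fmap_surj⟩, ?_⟩⟩
  intro x y
  exact adj_iff hm hn x y
end

section
/- Let n be a positive integer and let K_n □ K_n be the n by n rook's graph. Let M_r be a minimal dominating set of K_n □ K_n that contains exactly one vertex in every row but not exactly one vertex in every column, and let M_c be a minimal dominating set that contains exactly one vertex in every column but not exactly one vertex in every row. Then M_r and M_c are not adjacent in the reconfiguration graph R(K_n □ K_n). -/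
lemma graph_of {n : ℕ} (M : Set (Fin n × Fin n)) (h : ∀ i, ∃! j, (i, j) ∈ M) :
    ∃ f : Fin n → Fin n, ∀ p : Fin n × Fin n, p ∈ M ↔ p.2 = f p.1 := by
  choose f hf hu using h
  refine ⟨f, fun p => ⟨fun hp => hu p.1 p.2 hp, fun hp => ?_⟩⟩
  · have : (p.1, p.2) ∈ M := hp ▸ hf p.1
    simpa using this

lemma ncard_graph {n : ℕ} (M : Set (Fin n × Fin n)) (f : Fin n → Fin n)
    (hf : ∀ p : Fin n × Fin n, p ∈ M ↔ p.2 = f p.1) : M.ncard = n := by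
  have hM : M = Set.range (fun i => (i, f i)) := by
    ext ⟨i, j⟩
    simp only [hf, Set.mem_range, Prod.mk.injEq]
    constructor
    · rintro rfl; exact ⟨i, rfl, rfl⟩
    · rintro ⟨k, rfl, rfl⟩; rfl
  rw [hM, ← Set.image_univ,
    Set.ncard_image_of_injective _ (fun a b h => congrArg Prod.fst h), Set.ncard_univ]
  simp

lemma not_bij {n : ℕ} (M : Set (Fin n × Fin n)) (f : Fin n → Fin n)
    (hf : ∀ p : Fin n × Fin n, p ∈ M ↔ p.2 = f p.1)
    (h2 : ¬ ∀ j : Fin n, ∃! i : Fin n, (i, j) ∈ M) : ¬ Function.Bijective f := by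
  intro hb
  apply h2
  intro j
  obtain ⟨i, hi, hiu⟩ := hb.existsUnique j
  exact ⟨i, (hf _).2 hi.symm, fun y hy => hiu y ((hf _).1 hy).symm⟩

lemma key {n : ℕ} (Mr Mc : Set (Fin n × Fin n)) (f : Fin n → Fin n)
    (hf : ∀ p : Fin n × Fin n, p ∈ Mr ↔ p.2 = f p.1)
    (hfr : ¬ Function.Bijective f)
    (hc1 : ∀ j : Fin n, ∃! i : Fin n, (i, j) ∈ Mc)
    (hc2 : ¬ ∀ i : Fin n, ∃! j : Fin n, (i, j) ∈ Mc)
    (u v : Fin n × Fin n)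
    (hd1 : Mc \ Mr = {v}) (hd2 : Mr \ Mc = {u})
    (hadj : u.1 = v.1 ∨ u.2 = v.2) : False := by
  have hv' : v ∈ Mc \ Mr := by rw [hd1]; rfl
  have hu' : u ∈ Mr \ Mc := by rw [hd2]; rfl
  obtain ⟨hvMc, hvMr⟩ := hv'
  obtain ⟨huMr, huMc⟩ := hu'
  have hmem : ∀ x, x ∈ Mc ↔ x = v ∨ (x ∈ Mr ∧ x ≠ u) := by
    intro x
    constructor
    · intro hx
      by_cases hxr : x ∈ Mr
      · exact Or.inr ⟨hxr, fun h => huMc (h ▸ hx)⟩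
      · left; have : x ∈ Mc \ Mr := ⟨hx, hxr⟩; rwa [hd1] at this
    · rintro (rfl | ⟨hxr, hxu⟩)
      · exact hvMc
      · by_contra hxc
        have : x ∈ Mr \ Mc := ⟨hxr, hxc⟩
        rw [hd2] at this
        exact hxu this
  have hufst : u.2 = f u.1 := (hf u).1 huMr
  by_cases hcase : u.1 = v.1
  · apply hc2
    intro i
    by_cases hi : i = v.1
    · subst hi
      refine ⟨v.2, (hmem _).2 (Or.inl rfl), ?_⟩
      intro j hj
      rcases (hmem _).1 hj with h | ⟨hm, hne⟩
      · exact congrArg Prod.snd h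
      · exfalso
        apply hne
        have hj' : j = f v.1 := (hf _).1 hm
        have : u = (v.1, j) := by
          apply Prod.ext
          · exact hcase
          · rw [hufst, hcase]; exact hj'.symm
        exact this.symm
    · refine ⟨f i, (hmem _).2 (Or.inr ⟨(hf _).2 rfl, fun h => hi (by
        have := congrArg Prod.fst h; simpa [hcase] using this.trans hcase)⟩), ?_⟩
      intro j hj
      rcases (hmem _).1 hj with h | ⟨hm, _⟩
      · exact absurd (congrArg Prod.fst h) hi
      · exact (hf _).1 hm
  · have hb : v.2 = f u.1 := by
      rcases hadj with h | h
      · exact absurd h hcase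
      · rw [← h]; exact hufst
    have hns : ¬ Function.Surjective f := fun hs =>
      hfr ⟨Finite.injective_iff_surjective.mpr hs, hs⟩
    obtain ⟨d, hd⟩ : ∃ d, ∀ i, f i ≠ d := by
      simpa [Function.Surjective, not_forall, eq_comm] using hns
    obtain ⟨i, hi, -⟩ := hc1 d
    rcases (hmem _).1 hi with h | ⟨hm, -⟩
    · exact hd u.1 (by rw [← hb]; exact (congrArg Prod.snd h).symm)
    · exact hd i ((hf _).1 hm).symm

lemma diff_singleton {α : Type*} [Finite α] {A B : Set α} {v : α} {m : ℕ}
    (h : B \ A = {v}) (hA : A.ncard = m) (hB : B.ncard = m) : ∃ u, A \ B = {u} := by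
  have h1 := Set.ncard_inter_add_ncard_diff_eq_ncard A B (Set.toFinite A)
  have h2 := Set.ncard_inter_add_ncard_diff_eq_ncard B A (Set.toFinite B)
  rw [Set.inter_comm, h, Set.ncard_singleton] at h2
  rw [← Set.ncard_eq_one]
  rw [hA] at h1; rw [hB] at h2
  omega

lemma swap_diff {n : ℕ} (A B : Set (Fin n × Fin n)) {w : Fin n × Fin n} (h : A \ B = {w}) :
    (Prod.swap ⁻¹' A) \ (Prod.swap ⁻¹' B) = {Prod.swap w} := by
  ext p
  simp only [Set.mem_diff, Set.mem_preimage, Set.mem_singleton_iff]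
  constructor
  · intro hp
    have hw : p.swap ∈ A \ B := hp
    rw [h] at hw
    rw [← Prod.swap_swap p, hw]
  · rintro rfl
    have hw : w ∈ A \ B := by rw [h]; rfl
    simpa using hw

/-- In R(K_n □ K_n), a minimal dominating set with exactly one vertex in every row but not in
every column is not adjacent to one with exactly one vertex in every column but not in every
row. -/
theorem stmt8 (n : ℕ) (hn : 0 < n) (Mr Mc : Set (Fin n × Fin n))
    (hMr : IsMinDomSet ((⊤ : SimpleGraph (Fin n)) □ (⊤ : SimpleGraph (Fin n))) Mr)
    (hMc : IsMinDomSet ((⊤ : SimpleGraph (Fin n)) □ (⊤ : SimpleGraph (Fin n))) Mc)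
    (hr1 : ∀ i : Fin n, ∃! j : Fin n, (i, j) ∈ Mr)
    (hr2 : ¬ ∀ j : Fin n, ∃! i : Fin n, (i, j) ∈ Mr)
    (hc1 : ∀ j : Fin n, ∃! i : Fin n, (i, j) ∈ Mc)
    (hc2 : ¬ ∀ i : Fin n, ∃! j : Fin n, (i, j) ∈ Mc) :
    ¬ (ReconfigGraph ((⊤ : SimpleGraph (Fin n)) □ (⊤ : SimpleGraph (Fin n)))).Adj
        ⟨Mr, hMr⟩ ⟨Mc, hMc⟩ := by
  rintro ⟨hne, w, hcase⟩
  obtain ⟨f, hf⟩ := graph_of Mr hr1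
  obtain ⟨g, hg⟩ := graph_of (Prod.swap ⁻¹' Mc) (fun i => hc1 i)
  have nr : Mr.ncard = n := ncard_graph Mr f hf
  have nc : Mc.ncard = n := by
    have h1 : (Prod.swap ⁻¹' Mc).ncard = Mc.ncard := by
      rw [← Set.image_swap_eq_preimage_swap]
      exact Set.ncard_image_of_injective _ Prod.swap_injective
    rw [← h1]
    exact ncard_graph _ g hg
  rcases hcase with ⟨hd1, hsub⟩ | ⟨hd1, hsub⟩
  · obtain ⟨u, hd2⟩ := diff_singleton hd1 nr nc
    have huw : u ∈ Mr \ Mc := by rw [hd2]; rfl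
    have hadj : u.1 = w.1 ∨ u.2 = w.2 := by
      have h := hsub huw
      simp only [SimpleGraph.mem_neighborSet, SimpleGraph.boxProd_adj, SimpleGraph.top_adj] at h
      tauto
    exact key Mr Mc f hf (not_bij Mr f hf hr2) hc1 hc2 u w hd1 hd2 hadj
  · obtain ⟨u, hd2⟩ := diff_singleton hd1 nc nr
    have huw : u ∈ Mc \ Mr := by rw [hd2]; rfl
    have hadj : (Prod.swap u).1 = (Prod.swap w).1 ∨ (Prod.swap u).2 = (Prod.swap w).2 := by
      have h := hsub huw
      simp only [SimpleGraph.mem_neighborSet, SimpleGraph.boxProd_adj, SimpleGraph.top_adj] at h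
      simp only [Prod.fst_swap, Prod.snd_swap]
      tauto
    have hgr : ¬ Function.Bijective g :=
      not_bij (Prod.swap ⁻¹' Mc) g hg (fun h => hc2 (fun i => h i))
    exact key (Prod.swap ⁻¹' Mc) (Prod.swap ⁻¹' Mr) g hg hgr
      (fun j => hr1 j) (fun h => hr2 (fun j => h j)) (Prod.swap u) (Prod.swap w)
      (swap_diff Mr Mc hd1) (swap_diff Mc Mr hd2) hadj
end

section
/- Let G be a finite simple graph and S an independent set of vertices of G. Let M_S be the collection of minimal dominating sets of G that contain every vertex of S and no vertex of N(S). Then the subgraph of the reconfiguration graph R(G) induced by M_S is isomorphic to the reconfiguration graph R(G − N[S]) of the subgraph of G induced by V(G) \ N[S]; indeed, M_S consists exactly of the sets M ∪ S where M is a minimal dominating set of G − N[S], and two such sets M₁ ∪ S and M₂ ∪ S are adjacent in R(G) if and only if M₁ and M₂ are adjacent in R(G − N[S]). -/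
section Aux

variable {V : Type*} {G : SimpleGraph V} {S : Set V}

/-- The closed neighbourhood of `S`. -/
private abbrev NcS (G : SimpleGraph V) (S : Set V) : Set V :=
  S ∪ ⋃ v ∈ S, G.neighborSet v

private lemma mem_bigU {x : V} :
    x ∈ (⋃ v ∈ S, G.neighborSet v) ↔ ∃ u ∈ S, G.Adj u x := by
  simp [SimpleGraph.mem_neighborSet]

private lemma induce_adj' {s : Set V} {a b : s} :
    (G.induce s).Adj a b ↔ G.Adj a b := Iff.rfl

private lemma coe_notmem_S (x : ↥(NcS G S)ᶜ) : (x : V) ∉ S := fun h =>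
  x.2 (Set.mem_union_left _ h)

private lemma coe_no_S_nbr (x : ↥(NcS G S)ᶜ) {u : V} (hu : u ∈ S) : ¬ G.Adj u x := fun h =>
  x.2 (Set.mem_union_right _ (mem_bigU.2 ⟨u, hu, h⟩))

/-- Domination transfer. -/
private lemma key_dom (M : Set ↥(NcS G S)ᶜ) :
    IsDomSet G (Subtype.val '' M ∪ S) ↔ IsDomSet (G.induce (NcS G S)ᶜ) M := by
  constructor
  · intro h x
    rcases h x.1 with hx | ⟨u, hu, hadj⟩
    · rcases hx with hx | hx
      · left
        rcases hx with ⟨y, hy, hyx⟩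
        rwa [Subtype.val_injective hyx] at hy
      · exact absurd hx (coe_notmem_S x)
    · rcases hu with hu | hu
      · rcases hu with ⟨y, hy, rfl⟩
        exact Or.inr ⟨y, hy, hadj⟩
      · exact absurd hadj.symm (coe_no_S_nbr x hu)
  · intro h v
    by_cases hv : v ∈ NcS G S
    · rcases hv with hv | hv
      · exact Or.inl (Or.inr hv)
      · rcases mem_bigU.1 hv with ⟨u, hu, hadj⟩
        exact Or.inr ⟨u, Or.inr hu, hadj.symm⟩
    · rcases h ⟨v, hv⟩ with hx | ⟨y, hy, hadj⟩
      · exact Or.inl (Or.inl ⟨⟨v, hv⟩, hx, rfl⟩)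
      · exact Or.inr ⟨y, Or.inl ⟨y, hy, rfl⟩, hadj⟩

/-- Minimality transfer. -/
private lemma key_min (hS : ∀ u ∈ S, ∀ w ∈ S, ¬ G.Adj u w) (M : Set ↥(NcS G S)ᶜ) :
    IsMinDomSet G (Subtype.val '' M ∪ S) ↔ IsMinDomSet (G.induce (NcS G S)ᶜ) M := by
  constructor
  · rintro ⟨hdom, hmin⟩
    refine ⟨(key_dom M).1 hdom, fun x hx hcon => ?_⟩
    refine hmin x.1 (Or.inl ⟨x, hx, rfl⟩) ?_
    have he : (Subtype.val '' M ∪ S) \ {(x : V)} =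
        Subtype.val '' (M \ {x}) ∪ S := by
      rw [Set.image_diff Subtype.val_injective, Set.image_singleton]
      ext z
      simp only [Set.mem_diff, Set.mem_union, Set.mem_singleton_iff]
      constructor
      · rintro ⟨hz | hz, hzx⟩
        · exact Or.inl ⟨hz, hzx⟩
        · exact Or.inr hz
      · rintro (⟨hz, hzx⟩ | hz)
        · exact ⟨Or.inl hz, hzx⟩
        · refine ⟨Or.inr hz, fun hzz => ?_⟩
          subst hzz
          exact coe_notmem_S x hz
    rw [he]
    exact (key_dom (M \ {x})).2 hcon
  · rintro ⟨hdom, hmin⟩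
    refine ⟨(key_dom M).2 hdom, fun v hv hcon => ?_⟩
    rcases hv with hv | hv
    · rcases hv with ⟨x, hx, rfl⟩
      have he : (Subtype.val '' M ∪ S) \ {(x : V)} =
          Subtype.val '' (M \ {x}) ∪ S := by
        rw [Set.image_diff Subtype.val_injective, Set.image_singleton]
        ext z
        simp only [Set.mem_diff, Set.mem_union, Set.mem_singleton_iff]
        constructor
        · rintro ⟨hz | hz, hzx⟩
          · exact Or.inl ⟨hz, hzx⟩
          · exact Or.inr hz
        · rintro (⟨hz, hzx⟩ | hz)
          · exact ⟨Or.inl hz, hzx⟩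
          · refine ⟨Or.inr hz, fun hzz => ?_⟩
            subst hzz
            exact coe_notmem_S x hz
      rw [he] at hcon
      exact hmin x hx ((key_dom (M \ {x})).1 hcon)
    · -- removing a vertex of S leaves it undominated
      rcases hcon v with hv' | ⟨u, hu, hadj⟩
      · exact hv'.2 rfl
      · rcases hu.1 with hu' | hu'
        · rcases hu' with ⟨y, _, rfl⟩
          exact coe_no_S_nbr y hv hadj
        · exact hS v hv u hu' hadj

/-- Adjacency transfer. -/
private lemma key_adj (M₁ M₂ : Set ↥(NcS G S)ᶜ) :
    ReconfigAdj G (Subtype.val '' M₁ ∪ S) (Subtype.val '' M₂ ∪ S) ↔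
      ReconfigAdj (G.induce (NcS G S)ᶜ) M₁ M₂ := by
  have hdiff : ∀ A B : Set ↥(NcS G S)ᶜ,
      (Subtype.val '' A ∪ S) \ (Subtype.val '' B ∪ S) = Subtype.val '' (A \ B) := by
    intro A B
    rw [Set.image_diff Subtype.val_injective]
    ext z
    simp only [Set.mem_diff, Set.mem_union, not_or]
    constructor
    · rintro ⟨hz | hz, hzB, hzS⟩
      · exact ⟨hz, hzB⟩
      · exact absurd hz hzS
    · rintro ⟨⟨x, hx, rfl⟩, hzB⟩
      exact ⟨Or.inl ⟨x, hx, rfl⟩, hzB, coe_notmem_S x⟩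
  constructor
  · rintro ⟨v, h | h⟩
    · rw [hdiff, hdiff] at h
      obtain ⟨heq, hsub⟩ := h
      have hv : v ∈ Subtype.val '' (M₂ \ M₁) := heq ▸ rfl
      rcases hv with ⟨w, hw, rfl⟩
      refine ⟨w, Or.inl ⟨?_, ?_⟩⟩
      · rw [← Set.image_singleton] at heq
        exact Set.image_injective.2 Subtype.val_injective heq
      · intro y hy
        exact hsub ⟨y, hy, rfl⟩
    · rw [hdiff, hdiff] at h
      obtain ⟨heq, hsub⟩ := h
      have hv : v ∈ Subtype.val '' (M₁ \ M₂) := heq ▸ rfl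
      rcases hv with ⟨w, hw, rfl⟩
      refine ⟨w, Or.inr ⟨?_, ?_⟩⟩
      · rw [← Set.image_singleton] at heq
        exact Set.image_injective.2 Subtype.val_injective heq
      · intro y hy
        exact hsub ⟨y, hy, rfl⟩
  · rintro ⟨w, h | h⟩
    · refine ⟨w.1, Or.inl ⟨?_, ?_⟩⟩
      · rw [hdiff, h.1, Set.image_singleton]
      · rw [hdiff]
        rintro z ⟨y, hy, rfl⟩
        exact h.2 hy
    · refine ⟨w.1, Or.inr ⟨?_, ?_⟩⟩
      · rw [hdiff, h.1, Set.image_singleton]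
      · rw [hdiff]
        rintro z ⟨y, hy, rfl⟩
        exact h.2 hy

/-- Reconstruction of `T` from its trace on the complement. -/
private lemma T_form {T : Set V} (hsub : S ⊆ T)
    (hemp : T ∩ (⋃ v ∈ S, G.neighborSet v) = ∅) :
    T = Subtype.val '' ((Subtype.val : ↥(NcS G S)ᶜ → V) ⁻¹' T) ∪ S := by
  rw [Subtype.image_preimage_coe]
  ext z
  simp only [Set.mem_union, Set.mem_inter_iff, Set.mem_compl_iff]
  constructor
  · intro hz
    by_cases hzS : z ∈ S
    · exact Or.inr hzS
    · refine Or.inl ⟨?_, hz⟩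
      rintro (h | h)
      · exact hzS h
      · exact Set.eq_empty_iff_forall_notMem.1 hemp z ⟨hz, h⟩
  · rintro (⟨_, hz⟩ | hz)
    · exact hz
    · exact hsub hz

end Aux

section Iso

variable {V : Type*} {G : SimpleGraph V} {S : Set V}

private lemma key_iso (hS : ∀ u ∈ S, ∀ w ∈ S, ¬ G.Adj u w) :
    Nonempty
      (((ReconfigGraph G).induce
          {M : {T : Set V // IsMinDomSet G T} |
            S ⊆ M.1 ∧ M.1 ∩ (⋃ v ∈ S, G.neighborSet v) = ∅}) ≃g
        ReconfigGraph (G.induce (NcS G S)ᶜ)) := by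
  have hempS : (Subtype.val : ↥(NcS G S)ᶜ → V) ⁻¹' S = ∅ :=
    Set.eq_empty_iff_forall_notMem.2 fun x hx => coe_notmem_S x hx
  have hemp' : ∀ M : Set ↥(NcS G S)ᶜ,
      (Subtype.val '' M ∪ S) ∩ (⋃ v ∈ S, G.neighborSet v) = ∅ := by
    intro M
    refine Set.eq_empty_iff_forall_notMem.2 ?_
    rintro z ⟨hz1 | hz1, hz2⟩
    · rcases hz1 with ⟨x, _, rfl⟩
      exact x.2 (Set.mem_union_right _ hz2)
    · rcases mem_bigU.1 hz2 with ⟨u, hu, hadj⟩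
      exact hS u hu z hz1 hadj
  refine ⟨⟨⟨fun A => ⟨Subtype.val ⁻¹' A.1.1,
      (key_min hS _).1 ((T_form A.2.1 A.2.2) ▸ A.1.2)⟩,
    fun M => ⟨⟨Subtype.val '' M.1 ∪ S, (key_min hS M.1).2 M.2⟩,
      Set.subset_union_right, hemp' M.1⟩,
    fun A => ?_, fun M => ?_⟩, @fun A B => ?_⟩⟩
  · exact Subtype.ext (Subtype.ext (T_form A.2.1 A.2.2).symm)
  · refine Subtype.ext ?_
    show Subtype.val ⁻¹' (Subtype.val '' M.1 ∪ S) = M.1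
    rw [Set.preimage_union, hempS, Set.union_empty,
      Set.preimage_image_eq _ Subtype.val_injective]
  · obtain ⟨⟨T₁, hm₁⟩, hA₁, hA₂⟩ := A
    obtain ⟨⟨T₂, hm₂⟩, hB₁, hB₂⟩ := B
    have hf₁ : T₁ = Subtype.val ''
        ((Subtype.val : ↥(NcS G S)ᶜ → V) ⁻¹' T₁) ∪ S := T_form hA₁ hA₂
    have hf₂ : T₂ = Subtype.val ''
        ((Subtype.val : ↥(NcS G S)ᶜ → V) ⁻¹' T₂) ∪ S := T_form hB₁ hB₂
    have hne_iff : (Subtype.val ⁻¹' T₁ : Set ↥(NcS G S)ᶜ) = Subtype.val ⁻¹' T₂ ↔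
        T₁ = T₂ := by
      constructor
      · intro h
        rw [hf₁, hf₂, h]
      · intro h
        rw [h]
    have hadj_iff : ReconfigAdj (G.induce (NcS G S)ᶜ) (Subtype.val ⁻¹' T₁)
        (Subtype.val ⁻¹' T₂) ↔ ReconfigAdj G T₁ T₂ := by
      conv_rhs => rw [hf₁, hf₂]
      exact (key_adj _ _).symm
    constructor
    · rintro ⟨hne, hadj⟩
      exact ⟨fun h => hne (Subtype.ext (hne_iff.2 (congrArg Subtype.val h))),
        hadj_iff.1 hadj⟩
    · rintro ⟨hne, hadj⟩
      exact ⟨fun h => hne (Subtype.ext (hne_iff.1 (congrArg Subtype.val h))),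
        hadj_iff.2 hadj⟩

end Iso


/-- For an independent set `S`, the minimal dominating sets of `G` containing all of `S` and
avoiding `N(S)` are exactly the sets `M ∪ S` with `M` a minimal dominating set of
`G − N[S]`; reconfiguration adjacency is preserved, and hence the induced subgraph of
`R(G)` on this family is isomorphic to `R(G − N[S])`. -/
theorem stmt10 {V : Type*} [Fintype V] (G : SimpleGraph V) (S : Set V)
    (hS : ∀ u ∈ S, ∀ w ∈ S, ¬ G.Adj u w) :
    (∀ T : Set V,
        (IsMinDomSet G T ∧ S ⊆ T ∧ T ∩ (⋃ v ∈ S, G.neighborSet v) = ∅) ↔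
          ∃ M : Set ↥((S ∪ ⋃ v ∈ S, G.neighborSet v)ᶜ),
            IsMinDomSet (G.induce ((S ∪ ⋃ v ∈ S, G.neighborSet v)ᶜ)) M ∧
              T = (Subtype.val '' M) ∪ S) ∧
    (∀ M₁ M₂ : Set ↥((S ∪ ⋃ v ∈ S, G.neighborSet v)ᶜ),
        IsMinDomSet (G.induce ((S ∪ ⋃ v ∈ S, G.neighborSet v)ᶜ)) M₁ →
        IsMinDomSet (G.induce ((S ∪ ⋃ v ∈ S, G.neighborSet v)ᶜ)) M₂ →
          (ReconfigAdj G ((Subtype.val '' M₁) ∪ S) ((Subtype.val '' M₂) ∪ S) ↔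
            ReconfigAdj (G.induce ((S ∪ ⋃ v ∈ S, G.neighborSet v)ᶜ)) M₁ M₂)) ∧
    Nonempty
      (((ReconfigGraph G).induce
          {M : {T : Set V // IsMinDomSet G T} |
            S ⊆ M.1 ∧ M.1 ∩ (⋃ v ∈ S, G.neighborSet v) = ∅}) ≃g
        ReconfigGraph (G.induce ((S ∪ ⋃ v ∈ S, G.neighborSet v)ᶜ))) := by
  refine ⟨fun T => ⟨?_, ?_⟩, fun M₁ M₂ _ _ => key_adj M₁ M₂, key_iso hS⟩
  · rintro ⟨hmin, hsub, hemp⟩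
    refine ⟨Subtype.val ⁻¹' T, (key_min hS _).1 ((T_form hsub hemp) ▸ hmin),
      T_form hsub hemp⟩
  · rintro ⟨M, hM, rfl⟩
    refine ⟨(key_min hS M).2 hM, Set.subset_union_right, ?_⟩
    refine Set.eq_empty_iff_forall_notMem.2 ?_
    rintro z ⟨hz1 | hz1, hz2⟩
    · rcases hz1 with ⟨x, _, rfl⟩
      exact x.2 (Set.mem_union_right _ hz2)
    · rcases mem_bigU.1 hz2 with ⟨u, hu, hadj⟩
      exact hS u hu z hz1 hadj
end

section
/- Let G be a finite simple graph and r a positive integer. The reconfiguration graph R(G) is isomorphic to the edgeless graph on r vertices if and only if G has no edges and r = 1. -/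
set_option linter.unusedSectionVars false


section Aux

variable {V : Type*} [Fintype V] (G : SimpleGraph V)

/-- independence predicate -/
def AuxIndep (S : Set V) : Prop := ∀ a ∈ S, ∀ b ∈ S, ¬ G.Adj a b

variable {G}

lemma aux_exists_maximal (F : Set (Set V)) (hne : F.Nonempty) :
    ∃ S ∈ F, ∀ T ∈ F, S ⊆ T → S = T := by
  obtain ⟨S, hS, h⟩ := Set.Finite.exists_maximalFor id F (Set.toFinite F) hne
  exact ⟨S, hS, fun T hT hST => le_antisymm hST (h hT hST)⟩

lemma aux_mds_of_maxind {I : Set V} (hind : AuxIndep G I)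
    (hdom : ∀ w, w ∉ I → ∃ j ∈ I, G.Adj w j) : IsMinDomSet G I := by
  constructor
  · intro w
    by_cases hw : w ∈ I
    · exact Or.inl hw
    · exact Or.inr (hdom w hw)
  · intro v hv hcon
    rcases hcon v with h | ⟨j, hj, hadj⟩
    · exact h.2 rfl
    · exact hind v hv j hj.1 hadj

/-- step A: find a maximal independent set `I`, `v ∉ I`, `a ∈ I` adjacent to `v`
with `(I \ {a}) ∪ {v}` dominating. -/
lemma aux_stepA {x y : V} (hxy : G.Adj x y) :
    ∃ (I : Set V) (v a : V), AuxIndep G I ∧ (∀ w, w ∉ I → ∃ j ∈ I, G.Adj w j) ∧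
      v ∉ I ∧ a ∈ I ∧ G.Adj v a ∧ IsDomSet G ((I \ {a}) ∪ {v}) := by
  classical
  set v := x with hv
  -- maximal independent subset of the complement of N[v]
  obtain ⟨J, ⟨hJind, hJav⟩, hJmax⟩ :=
    aux_exists_maximal {S : Set V | AuxIndep G S ∧ ∀ w ∈ S, ¬ G.Adj v w ∧ w ≠ v}
      ⟨∅, ⟨fun a ha => absurd ha (Set.notMem_empty a),
          fun w hw => absurd hw (Set.notMem_empty w)⟩⟩
  -- J dominates the complement of N[v]
  have hJ3 : ∀ w, ¬ G.Adj v w → w ≠ v → w ∉ J → ∃ j ∈ J, G.Adj w j := by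
    intro w hwv hwne hwJ
    by_contra hcon
    push_neg at hcon
    have : J = J ∪ {w} := by
      apply hJmax
      · constructor
        · intro a ha b hb
          rcases ha with ha | ha <;> rcases hb with hb | hb
          · exact hJind a ha b hb
          · rw [Set.mem_singleton_iff] at hb; subst hb
            intro h; exact hcon a ha h.symm
          · rw [Set.mem_singleton_iff] at ha; subst ha
            exact hcon b hb
          · rw [Set.mem_singleton_iff] at ha hb; subst ha; subst hb
            exact G.loopless.irrefl _
        · intro u hu
          rcases hu with hu | hu
          · exact hJav u hu
          · rw [Set.mem_singleton_iff] at hu; subst hu; exact ⟨hwv, hwne⟩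
      · exact Set.subset_union_left
    exact hwJ (by rw [this]; exact Set.mem_union_right _ rfl)
  by_cases hcase : ∃ a, G.Adj v a ∧ ∀ j ∈ J, ¬ G.Adj a j
  · -- Case 1
    obtain ⟨a, hva, haJ⟩ := hcase
    have haJ' : a ∉ J := fun h => (hJav a h).1 hva
    -- extend J ∪ {a} to a maximal independent set
    obtain ⟨I, ⟨hIind, hIsub⟩, hImax⟩ :=
      aux_exists_maximal {S : Set V | AuxIndep G S ∧ J ∪ {a} ⊆ S}
        ⟨J ∪ {a}, ⟨by
          intro c hc b hb
          rcases hc with hc | hc <;> rcases hb with hb | hb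
          · exact hJind c hc b hb
          · rw [Set.mem_singleton_iff] at hb; subst hb
            intro h; exact haJ c hc h.symm
          · rw [Set.mem_singleton_iff] at hc; subst hc; exact haJ b hb
          · rw [Set.mem_singleton_iff] at hc hb; subst hc; subst hb
            exact G.loopless.irrefl _, subset_rfl⟩⟩
    have haI : a ∈ I := hIsub (Set.mem_union_right _ rfl)
    have hJI : J ⊆ I := fun j hj => hIsub (Set.mem_union_left _ hj)
    have hIdom : ∀ w, w ∉ I → ∃ j ∈ I, G.Adj w j := by
      intro w hw
      by_contra hcon
      push_neg at hcon
      have : I = I ∪ {w} := by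
        apply hImax
        · constructor
          · intro c hc b hb
            rcases hc with hc | hc <;> rcases hb with hb | hb
            · exact hIind c hc b hb
            · rw [Set.mem_singleton_iff] at hb; subst hb
              intro h; exact hcon c hc h.symm
            · rw [Set.mem_singleton_iff] at hc; subst hc; exact hcon b hb
            · rw [Set.mem_singleton_iff] at hc hb; subst hc; subst hb
              exact G.loopless.irrefl _
          · exact hIsub.trans Set.subset_union_left
        · exact Set.subset_union_left
      exact hw (by rw [this]; exact Set.mem_union_right _ rfl)
    have hvI : v ∉ I := fun h => hIind v h a haI hva
    refine ⟨I, v, a, hIind, hIdom, hvI, haI, hva, ?_⟩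
    intro w
    by_cases hw1 : w = v
    · subst hw1; exact Or.inl (Set.mem_union_right _ rfl)
    by_cases hw2 : G.Adj v w
    · exact Or.inr ⟨v, Set.mem_union_right _ rfl, hw2.symm⟩
    -- w outside N[v]
    have hwa : w ≠ a := fun h => hw2 (h ▸ hva)
    by_cases hwJ : w ∈ J
    · exact Or.inl (Set.mem_union_left _ ⟨hJI hwJ, hwa⟩)
    · obtain ⟨j, hj, hadj⟩ := hJ3 w hw2 hw1 hwJ
      have hja : j ≠ a := fun h => haJ' (h ▸ hj)
      exact Or.inr ⟨j, Set.mem_union_left _ ⟨hJI hj, hja⟩, hadj⟩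
  · -- Case 2 : every neighbour of v is dominated by J; take I = J ∪ {v}, use y
    push_neg at hcase
    have hdomN : ∀ a, G.Adj v a → ∃ j ∈ J, G.Adj a j := fun a ha => by
      obtain ⟨j, hj, hadj⟩ := hcase a ha
      exact ⟨j, hj, not_not.mp (by intro h; exact h hadj)⟩
    set I : Set V := J ∪ {v} with hI
    have hvI : v ∈ I := Set.mem_union_right _ rfl
    have hIind : AuxIndep G I := by
      intro c hc b hb
      rcases hc with hc | hc <;> rcases hb with hb | hb
      · exact hJind c hc b hb
      · rw [Set.mem_singleton_iff] at hb; subst hb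
        intro h; exact (hJav c hc).1 h.symm
      · rw [Set.mem_singleton_iff] at hc; subst hc; exact (hJav b hb).1
      · rw [Set.mem_singleton_iff] at hc hb; subst hc; subst hb
        exact G.loopless.irrefl _
    have hIdom : ∀ w, w ∉ I → ∃ j ∈ I, G.Adj w j := by
      intro w hw
      have hwv : w ≠ v := fun h => hw (h ▸ hvI)
      by_cases hw2 : G.Adj v w
      · exact ⟨v, hvI, hw2.symm⟩
      · obtain ⟨j, hj, hadj⟩ := hJ3 w hw2 hwv (fun h => hw (Set.mem_union_left _ h))
        exact ⟨j, Set.mem_union_left _ hj, hadj⟩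
    have hyJ : y ∉ J := fun h => (hJav y h).1 hxy
    have hyv : y ≠ v := fun h => G.loopless.irrefl v (h ▸ hxy)
    have hyI : y ∉ I := by
      intro h
      rcases h with h | h
      · exact hyJ h
      · exact hyv h
    refine ⟨I, y, v, hIind, hIdom, hyI, hvI, hxy.symm, ?_⟩
    intro w
    by_cases hw1 : w = y
    · subst hw1; exact Or.inl (Set.mem_union_right _ rfl)
    by_cases hwv : w = v
    · subst hwv; exact Or.inr ⟨y, Set.mem_union_right _ rfl, hxy⟩
    by_cases hw2 : G.Adj v w
    · obtain ⟨j, hj, hadj⟩ := hdomN w hw2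
      have hjv : j ≠ v := (hJav j hj).2
      exact Or.inr ⟨j, Set.mem_union_left _ ⟨Set.mem_union_left _ hj, hjv⟩, hadj⟩
    by_cases hwJ : w ∈ J
    · exact Or.inl (Set.mem_union_left _ ⟨Set.mem_union_left _ hwJ, hwv⟩)
    · obtain ⟨j, hj, hadj⟩ := hJ3 w hw2 hwv hwJ
      have hjv : j ≠ v := (hJav j hj).2
      exact Or.inr ⟨j, Set.mem_union_left _ ⟨Set.mem_union_left _ hj, hjv⟩, hadj⟩

/-- key lemma: a graph with an edge has two adjacent minimal dominating sets. -/
lemma aux_key {x y : V} (hxy : G.Adj x y) :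
    ∃ M₁ M₂ : Set V, IsMinDomSet G M₁ ∧ IsMinDomSet G M₂ ∧ M₁ ≠ M₂ ∧
      ReconfigAdj G M₁ M₂ := by
  classical
  obtain ⟨I, v, a, hIind, hIdom, hvI, haI, hva, hdomA⟩ := aux_stepA hxy
  -- take X maximal with a ∈ X ⊆ I ∩ N(v) and (I\X) ∪ {v} dominating
  obtain ⟨X, ⟨haX, hXI, hXN, hXdom⟩, hXmax⟩ :=
    aux_exists_maximal {X : Set V | a ∈ X ∧ X ⊆ I ∧ (∀ u ∈ X, G.Adj v u) ∧
        IsDomSet G ((I \ X) ∪ {v})}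
      ⟨{a}, ⟨rfl, by simpa using haI, by simpa using hva, hdomA⟩⟩
  set M₂ : Set V := (I \ X) ∪ {v} with hM₂
  have hvM₂ : v ∈ M₂ := Set.mem_union_right _ rfl
  have hM₁mds : IsMinDomSet G I := aux_mds_of_maxind hIind hIdom
  have hM₂mds : IsMinDomSet G M₂ := by
    refine ⟨hXdom, ?_⟩
    intro u hu hcon
    rcases hu with hu | hu
    · -- u ∈ I \ X
      have huv : u ≠ v := fun h => hvI (h ▸ hu.1)
      by_cases hadj : G.Adj v u
      · -- contradiction with maximality of X
        have hXu : X = X ∪ {u} := by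
          apply hXmax
          · refine ⟨Set.mem_union_left _ haX, ?_, ?_, ?_⟩
            · intro w hw
              rcases hw with hw | hw
              · exact hXI hw
              · rw [Set.mem_singleton_iff] at hw; exact hw ▸ hu.1
            · intro w hw
              rcases hw with hw | hw
              · exact hXN w hw
              · rw [Set.mem_singleton_iff] at hw; exact hw ▸ hadj
            · -- (I \ (X ∪ {u})) ∪ {v} is dominating
              have hset : (I \ (X ∪ {u})) ∪ {v} = M₂ \ {u} := by
                ext w
                simp only [hM₂, Set.mem_union, Set.mem_diff, Set.mem_singleton_iff,
                  Set.mem_union]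
                constructor
                · rintro (⟨hwI, hw⟩ | rfl)
                  · push_neg at hw
                    exact ⟨Or.inl ⟨hwI, hw.1⟩, hw.2⟩
                  · exact ⟨Or.inr rfl, huv.symm⟩
                · rintro ⟨(⟨hwI, hwX⟩ | rfl), hwu⟩
                  · exact Or.inl ⟨hwI, by push_neg; exact ⟨hwX, hwu⟩⟩
                  · exact Or.inr rfl
              rw [hset]; exact hcon
          · exact Set.subset_union_left
        exact hu.2 (by rw [hXu]; exact Set.mem_union_right _ rfl)
      · -- u not adjacent to v : u is undominated in M₂ \ {u}
        rcases hcon u with h | ⟨j, hj, hadj'⟩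
        · exact h.2 rfl
        · rcases hj.1 with hj' | hj'
          · exact hIind u hu.1 j hj'.1 hadj'
          · rw [Set.mem_singleton_iff] at hj'; subst hj'
            exact hadj hadj'.symm
    · -- u = v : then a is undominated
      rw [Set.mem_singleton_iff] at hu; subst hu
      rcases hcon a with h | ⟨j, hj, hadj'⟩
      · rcases h.1 with h' | h'
        · exact h'.2 haX
        · rw [Set.mem_singleton_iff] at h'; exact hvI (h' ▸ haI)
      · rcases hj.1 with hj' | hj'
        · exact hIind a haI j hj'.1 hadj'
        · rw [Set.mem_singleton_iff] at hj'; exact hj.2 hj'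
  refine ⟨I, M₂, hM₁mds, hM₂mds, fun h => hvI (h ▸ hvM₂), v, Or.inl ⟨?_, ?_⟩⟩
  · -- M₂ \ I = {v}
    ext w
    simp only [Set.mem_diff, Set.mem_singleton_iff]
    constructor
    · rintro ⟨hw, hwI⟩
      rcases hw with hw | hw
      · exact absurd hw.1 hwI
      · exact hw
    · rintro rfl
      exact ⟨hvM₂, hvI⟩
  · -- I \ M₂ ⊆ N(v)
    intro w hw
    have hwX : w ∈ X := by
      by_contra h
      exact hw.2 (Set.mem_union_left _ ⟨hw.1, h⟩)
    exact hXN w hwX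

lemma aux_bot_mds (S : Set V) :
    IsMinDomSet (⊥ : SimpleGraph V) S ↔ S = Set.univ := by
  constructor
  · rintro ⟨hdom, _⟩
    ext w
    simp only [Set.mem_univ, iff_true]
    rcases hdom w with h | ⟨u, _, hadj⟩
    · exact h
    · exact absurd hadj (by simp)
  · rintro rfl
    refine ⟨fun v => Or.inl (Set.mem_univ v), ?_⟩
    intro v _ hcon
    rcases hcon v with h | ⟨u, _, hadj⟩
    · exact h.2 rfl
    · exact absurd hadj (by simp)

end Aux

/-- R(G) is isomorphic to the edgeless graph on r vertices iff G is edgeless and r = 1. -/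
theorem stmt12 {V : Type*} [Fintype V] (G : SimpleGraph V) (r : ℕ) (hr : 0 < r) :
    Nonempty (ReconfigGraph G ≃g (⊥ : SimpleGraph (Fin r))) ↔ (G = ⊥ ∧ r = 1) := by
  constructor
  · rintro ⟨f⟩
    have hG : G = ⊥ := by
      by_contra h
      have hedge : ∃ x y, G.Adj x y := by
        by_contra h'
        push_neg at h'
        exact h (by ext x y; simp [h' x y])
      obtain ⟨x, y, hxy⟩ := hedge
      obtain ⟨M₁, M₂, h₁, h₂, hne, hadj⟩ := aux_key hxy
      have hradj : (ReconfigGraph G).Adj ⟨M₁, h₁⟩ ⟨M₂, h₂⟩ :=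
        ⟨fun h => hne (congrArg Subtype.val h), hadj⟩
      have := f.map_rel_iff.mpr hradj
      exact (SimpleGraph.bot_adj _ _).mp this
    subst hG
    refine ⟨rfl, ?_⟩
    -- the subtype is a subsingleton
    have hsub : ∀ A B : {S : Set V // IsMinDomSet (⊥ : SimpleGraph V) S}, A = B := by
      intro A B
      apply Subtype.ext
      rw [(aux_bot_mds A.1).mp A.2, (aux_bot_mds B.1).mp B.2]
    by_contra hr1
    have hr2 : 2 ≤ r := by omega
    have h01 : (⟨0, by omega⟩ : Fin r) = ⟨1, by omega⟩ := by
      have := hsub (f.symm ⟨0, by omega⟩) (f.symm ⟨1, by omega⟩)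
      exact f.symm.injective this
    simp at h01
  · rintro ⟨rfl, rfl⟩
    have hU : ∀ A : {S : Set V // IsMinDomSet (⊥ : SimpleGraph V) S},
        A = ⟨Set.univ, (aux_bot_mds Set.univ).mpr rfl⟩ := by
      intro A
      apply Subtype.ext
      exact (aux_bot_mds A.1).mp A.2
    refine ⟨⟨⟨fun _ => 0, fun _ => ⟨Set.univ, (aux_bot_mds Set.univ).mpr rfl⟩,
        fun A => ((hU A).symm), fun i => Subsingleton.elim _ _⟩, ?_⟩⟩
    intro A B
    simp only [Equiv.coe_fn_mk, SimpleGraph.bot_adj, false_iff]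
    rintro ⟨hne, -⟩
    exact hne ((hU A).trans (hU B).symm)
end

section
/- Let T be a tree with minimal dominating set M, let s be a stem of T (a vertex having at least one leaf neighbour), and let L be the set of leaf neighbours of s. If s ∈ M and no non-leaf neighbour of s lies in N₁(M), then M' = (M ∪ L) \ {s} is a minimal dominating set of T, and M' is adjacent to M in the reconfiguration graph R(T). -/
/-- A leaf is a vertex with exactly one neighbour. -/
def IsLeaf {V : Type*} (G : SimpleGraph V) (v : V) : Prop := ∃! w, G.Adj v w

/-- If `s ∈ M` is a stem of a tree `T` whose non-leaf neighbours all lie outside `N₁(M)`,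
then `(M ∪ L) \ {s}` is a minimal dominating set adjacent to `M` in `R(T)`, where `L` is the
set of leaf neighbours of `s`. -/
theorem stmt13 {V : Type*} [Fintype V] (T : SimpleGraph V) (hT : T.IsTree)
    (M : Set V) (hM : IsMinDomSet T M) (s : V)
    (L : Set V) (hL : L = {v | T.Adj s v ∧ IsLeaf T v}) (hstem : L.Nonempty)
    (hsM : s ∈ M)
    (hN1 : ∀ v : V, T.Adj s v → ¬ IsLeaf T v → ¬ (v ∉ M ∧ ∃! u, u ∈ M ∧ T.Adj v u)) :
    ∃ h' : IsMinDomSet T ((M ∪ L) \ {s}),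
      (ReconfigGraph T).Adj ⟨M, hM⟩ ⟨(M ∪ L) \ {s}, h'⟩ := by
  obtain ⟨ℓ₀, hℓ₀⟩ := hstem
  -- basic facts about leaves in L
  have hLnbr : ∀ ℓ ∈ L, ∀ w, T.Adj ℓ w → w = s := by
    intro ℓ hℓ w hw
    rw [hL] at hℓ
    obtain ⟨hadj, x, hx, hux⟩ := hℓ
    have h1 := hux w hw
    have h2 := hux s hadj.symm
    rw [h1, h2]
  have hsL : s ∉ L := by
    rw [hL]; rintro ⟨h, -⟩; exact T.loopless.irrefl s h
  have hLadj : ∀ ℓ ∈ L, T.Adj s ℓ := by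
    intro ℓ hℓ; rw [hL] at hℓ; exact hℓ.1
  -- leaves of L are not in M
  have hLM : ∀ ℓ ∈ L, ℓ ∉ M := by
    intro ℓ hℓ hℓM
    apply hM.2 ℓ hℓM
    intro v
    rcases hM.1 v with hv | ⟨u, hu, huv⟩
    · by_cases hvℓ : v = ℓ
      · subst hvℓ
        exact Or.inr ⟨s, ⟨hsM, fun h => T.loopless.irrefl s ((Set.mem_singleton_iff.mp h) ▸ (hLadj v hℓ))⟩,
          (hLadj v hℓ).symm⟩
      · exact Or.inl ⟨hv, hvℓ⟩
    · by_cases huℓ : u = ℓ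
      · subst huℓ
        have hvs : v = s := hLnbr u hℓ v huv.symm
        subst hvs
        exact Or.inl ⟨hsM, fun h => T.loopless.irrefl v ((Set.mem_singleton_iff.mp h) ▸ (hLadj u hℓ))⟩
      · exact Or.inr ⟨u, ⟨hu, huℓ⟩, huv⟩
  have hsℓ₀ : ℓ₀ ≠ s := fun h => T.loopless.irrefl s (h ▸ hLadj ℓ₀ hℓ₀)
  -- M' is dominating
  have hDom : IsDomSet T ((M ∪ L) \ {s}) := by
    intro v
    by_cases hvs : v = s
    · subst hvs
      exact Or.inr ⟨ℓ₀, ⟨Or.inr hℓ₀, hsℓ₀⟩, hLadj ℓ₀ hℓ₀⟩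
    by_cases hvL : v ∈ L
    · exact Or.inl ⟨Or.inr hvL, hvs⟩
    by_cases hvM : v ∈ M
    · exact Or.inl ⟨Or.inl hvM, hvs⟩
    rcases hM.1 v with hv | ⟨u, hu, huv⟩
    · exact absurd hv hvM
    by_cases hus : u = s
    · subst hus
      -- v is a non-leaf neighbour of s not in M; use hN1 to find another M-neighbour
      have hvnl : ¬ IsLeaf T v := by
        intro hlf
        exact hvL (by rw [hL]; exact ⟨huv.symm, hlf⟩)
      have h := hN1 v huv.symm hvnl
      push_neg at h
      have h2 := h hvM
      rw [ExistsUnique] at h2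
      push_neg at h2
      obtain ⟨y, ⟨hyM, hyadj⟩, hys⟩ := h2 u ⟨hu, huv⟩
      exact Or.inr ⟨y, ⟨Or.inl hyM, hys⟩, hyadj⟩
    · exact Or.inr ⟨u, ⟨Or.inl hu, hus⟩, huv⟩
  -- M' is minimal
  have hMin : ∀ v ∈ (M ∪ L) \ {s}, ¬ IsDomSet T (((M ∪ L) \ {s}) \ {v}) := by
    rintro v ⟨hvML, hvs⟩ hd
    by_cases hvL : v ∈ L
    · -- v is a leaf whose only neighbour s is not in M'
      rcases hd v with ⟨⟨-, -⟩, hne⟩ | ⟨u, ⟨⟨-, hus⟩, -⟩, huv⟩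
      · exact hne rfl
      · exact hus (hLnbr v hvL u huv)
    · have hvM : v ∈ M := hvML.resolve_right hvL
      -- minimality of M at v gives a witness w
      have hnd := hM.2 v hvM
      rw [IsDomSet] at hnd
      push_neg at hnd
      obtain ⟨w, hwM, hwadj⟩ := hnd
      have hws : w ≠ s := fun h => hwM ⟨h ▸ hsM, h ▸ (Ne.symm hvs)⟩
      have hwL : w ∉ L := by
        intro hwL
        exact hwadj s ⟨hsM, Ne.symm hvs⟩ ((hLadj w hwL).symm)
      rcases hd w with ⟨⟨hw1, -⟩, hwv⟩ | ⟨u, ⟨⟨hu1, -⟩, huv'⟩, huw⟩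
      · rcases hw1 with hw1 | hw1
        · exact hwM ⟨hw1, hwv⟩
        · exact hwL hw1
      · rcases hu1 with hu1 | hu1
        · exact hwadj u ⟨hu1, huv'⟩ huw
        · exact hws (hLnbr u hu1 w huw.symm)
  refine ⟨⟨hDom, hMin⟩, ?_, s, Or.inr ⟨?_, ?_⟩⟩
  · intro h
    have : M = (M ∪ L) \ {s} := congrArg Subtype.val h
    have : s ∈ (M ∪ L) \ {s} := this ▸ hsM
    exact this.2 rfl
  · ext x
    simp only [Set.mem_diff, Set.mem_singleton_iff, Set.mem_union]
    constructor
    · rintro ⟨hxM, hx⟩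
      by_contra hxs
      exact hx ⟨Or.inl hxM, hxs⟩
    · rintro rfl
      exact ⟨hsM, fun h => h.2 rfl⟩
  · rintro x ⟨⟨hx | hx, -⟩, hxM⟩
    · exact absurd hx hxM
    · exact hLadj x hx
end

section
/- If G is a split graph with split partition into a clique C_G and an independent set I_G, then the reconfiguration graph R(G) is connected and has diameter at most 2|I_G| + 1. -/
section Aux

variable {V : Type*} (G : SimpleGraph V) (C I : Set V)

/-- `I`-vertices with no neighbour in `B`. -/
def AuxA (B : Set V) : Set V := {u | u ∈ I ∧ ∀ b ∈ B, ¬ G.Adj b u}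

/-- The canonical minimal dominating set determined by `B ⊆ C`. -/
def FB (B : Set V) : Set V := B ∪ AuxA G I B

/-- `b` has a private neighbour in `I` with respect to `B`. -/
def HasPriv (B : Set V) (b : V) : Prop :=
  ∃ x ∈ I, G.Adj b x ∧ ∀ b' ∈ B, G.Adj b' x → b' = b

/-- Those `B` for which `FB B` is a minimal dominating set. -/
def ValidB (B : Set V) : Prop :=
  B ⊆ C ∧ B.Nonempty ∧ ∀ b ∈ B, B = {b} ∨ HasPriv G I B b

variable {G C I}
variable (hUnion : C ∪ I = Set.univ) (hdisj : C ∩ I = ∅)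
    (hC : G.IsClique C) (hI : ∀ u ∈ I, ∀ w ∈ I, ¬ G.Adj u w)

section Basic

include hdisj in
lemma not_mem_I {v : V} (hv : v ∈ C) : v ∉ I := fun hvI => by
  have : v ∈ C ∩ I := ⟨hv, hvI⟩
  rw [hdisj] at this; exact this

include hUnion in
lemma mem_C_or_I (v : V) : v ∈ C ∨ v ∈ I := by
  have : v ∈ C ∪ I := by rw [hUnion]; trivial
  exact this

lemma priv_of_mds {M : Set V} (hM : IsMinDomSet G M) {v : V} (hv : v ∈ M) :
    ∃ x, x ∉ M \ {v} ∧ ∀ w ∈ M \ {v}, ¬ G.Adj x w := by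
  have := hM.2 v hv
  rw [IsDomSet] at this
  push_neg at this
  exact this

lemma exists_other {B : Set V} {b : V} (hb : b ∈ B) (hne : B ≠ {b}) :
    ∃ b' ∈ B, b' ≠ b := by
  by_contra h
  push_neg at h
  exact hne (Set.eq_singleton_iff_unique_mem.mpr ⟨hb, h⟩)

end Basic

include hUnion hdisj hC hI in
/-- `FB B` is a minimal dominating set for every valid `B`. -/
lemma FB_mds {B : Set V} (hB : ValidB G C I B) : IsMinDomSet G (FB G I B) := by
  obtain ⟨hBC, ⟨b₀, hb₀⟩, hpriv⟩ := hB
  constructor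
  · -- dominating
    intro v
    rcases mem_C_or_I hUnion v with hvC | hvI
    · by_cases hvB : v ∈ B
      · exact Or.inl (Or.inl hvB)
      · exact Or.inr ⟨b₀, Or.inl hb₀, hC hvC (hBC hb₀) (fun h => hvB (h ▸ hb₀))⟩
    · by_cases hA : ∀ b ∈ B, ¬ G.Adj b v
      · exact Or.inl (Or.inr ⟨hvI, hA⟩)
      · push_neg at hA
        obtain ⟨b, hbB, hadj⟩ := hA
        exact Or.inr ⟨b, Or.inl hbB, hadj.symm⟩
  · -- minimality
    rintro v (hvB | hvA)
    · rcases hpriv v hvB with hsing | ⟨x, hxI, hadj, hx⟩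
      · -- B = {v}: v itself is undominated after removing v
        intro hdom
        rcases hdom v with h | ⟨u, ⟨hu, hune⟩, hadj⟩
        · exact h.2 rfl
        · rcases hu with huB | huA
          · rw [hsing] at huB; exact hune huB
          · exact huA.2 v hvB hadj
      · -- the private x is undominated after removing v
        intro hdom
        rcases hdom x with ⟨hx', _⟩ | ⟨u, ⟨hu, hune⟩, hadjxu⟩
        · rcases hx' with hxB | hxA
          · exact not_mem_I hdisj (hBC hxB) hxI
          · exact hxA.2 v hvB hadj
        · rcases hu with huB | huA
          · exact hune (hx u huB hadjxu.symm)
          · exact hI x hxI u huA.1 hadjxu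
    · -- v ∈ AuxA: v itself is undominated after removing v
      intro hdom
      rcases hdom v with h | ⟨u, ⟨hu, _⟩, hadj⟩
      · exact h.2 rfl
      · rcases hu with huB | huA
        · exact hvA.2 u huB hadj.symm
        · exact hI v hvA.1 u huA.1 hadj

include hUnion hI in
omit hdisj in
/-- A minimal dominating set avoiding `C` is `I` itself. -/
lemma mds_CI_empty {M : Set V} (hM : IsMinDomSet G M) (h : M ∩ C = ∅) : M = I := by
  apply Set.eq_of_subset_of_subset
  · intro m hm
    rcases mem_C_or_I hUnion m with hmC | hmI
    · exact absurd (h ▸ Set.mem_inter hm hmC) (Set.notMem_empty m)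
    · exact hmI
  · intro u huI
    rcases hM.1 u with hu | ⟨w, hwM, hadj⟩
    · exact hu
    · exfalso
      rcases mem_C_or_I hUnion w with hwC | hwI
      · exact absurd (h ▸ Set.mem_inter hwM hwC) (Set.notMem_empty w)
      · exact hI u huI w hwI hadj

include hUnion hdisj hC hI in
/-- Structure of minimal dominating sets meeting `C`. -/
lemma mds_structure {M : Set V} (hM : IsMinDomSet G M) (hne : (M ∩ C).Nonempty) :
    M = FB G I (M ∩ C) ∧ ValidB G C I (M ∩ C) := by
  set B := M ∩ C with hBdef
  -- members of M in I have no neighbour in B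
  have hAeq : ∀ u, u ∈ M → u ∈ I → ∀ b ∈ B, ¬ G.Adj b u := by
    intro u huM huI b hbB hadj
    obtain ⟨x, hx1, hx2⟩ := priv_of_mds hM huM
    have hbu : b ≠ u := fun h => not_mem_I hdisj (h ▸ hbB.2) huI
    rcases hM.1 x with hxM | ⟨w, hwM, hadjxw⟩
    · have hxu : x = u := by
        by_contra hne'
        exact hx1 ⟨hxM, hne'⟩
      subst hxu
      exact hx2 b ⟨hbB.1, hbu⟩ hadj.symm
    · have hxnM : x ∉ M := by
        intro hxM
        apply hx1
        refine ⟨hxM, ?_⟩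
        rintro rfl
        have hwx : w ≠ x := fun h => (G.irrefl (h ▸ hadjxw)).elim
        exact hx2 w ⟨hwM, hwx⟩ hadjxw
      have hwu : w = u := by
        by_contra hne'
        exact hx2 w ⟨hwM, hne'⟩ hadjxw
      subst hwu
      rcases mem_C_or_I hUnion x with hxC | hxI
      · have hxb : x ≠ b := fun h => hxnM (h ▸ hbB.1)
        exact hx2 b ⟨hbB.1, hbu⟩ (hC hxC hbB.2 hxb)
      · exact hI x hxI w huI hadjxw
  -- converse: I-vertices with no neighbour in B are in M
  have hconv : ∀ u ∈ I, (∀ b ∈ B, ¬ G.Adj b u) → u ∈ M := by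
    intro u huI hnadj
    rcases hM.1 u with hu | ⟨w, hwM, hadj⟩
    · exact hu
    · exfalso
      rcases mem_C_or_I hUnion w with hwC | hwI
      · exact hnadj w ⟨hwM, hwC⟩ hadj.symm
      · exact hI u huI w hwI hadj
  constructor
  · -- M = FB B
    ext v
    constructor
    · intro hvM
      rcases mem_C_or_I hUnion v with hvC | hvI
      · exact Or.inl ⟨hvM, hvC⟩
      · exact Or.inr ⟨hvI, hAeq v hvM hvI⟩
    · rintro (hvB | hvA)
      · exact hvB.1
      · exact hconv v hvA.1 hvA.2
  · refine ⟨Set.inter_subset_right, hne, ?_⟩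
    intro b hbB
    by_cases hsing : B = {b}
    · exact Or.inl hsing
    · right
      obtain ⟨b', hb'B, hb'ne⟩ := exists_other hbB hsing
      obtain ⟨x, hx1, hx2⟩ := priv_of_mds hM hbB.1
      rcases hM.1 x with hxM | ⟨w, hwM, hadjxw⟩
      · have hxb : x = b := by
          by_contra hne'
          exact hx1 ⟨hxM, hne'⟩
        subst hxb
        exact absurd (hC hb'B.2 hbB.2 hb'ne).symm (hx2 b' ⟨hb'B.1, hb'ne⟩)
      · have hxnM : x ∉ M := by
          intro hxM
          apply hx1
          refine ⟨hxM, ?_⟩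
          rintro rfl
          have hwx : w ≠ x := fun h => (G.irrefl (h ▸ hadjxw)).elim
          exact hx2 w ⟨hwM, hwx⟩ hadjxw
        have hwb : w = b := by
          by_contra hne'
          exact hx2 w ⟨hwM, hne'⟩ hadjxw
        subst hwb
        rcases mem_C_or_I hUnion x with hxC | hxI
        · exfalso
          have hxb' : x ≠ b' := fun h => hxnM (h ▸ hb'B.1)
          exact hx2 b' ⟨hb'B.1, hb'ne⟩ (hC hxC hb'B.2 hxb')
        · refine ⟨x, hxI, hadjxw.symm, ?_⟩
          intro b'' hb''B hadj''
          by_contra hne''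
          exact hx2 b'' ⟨hb''B.1, hne''⟩ hadj''.symm

lemma validb_singleton {c : V} (hc : c ∈ C) : ValidB G C I {c} :=
  ⟨Set.singleton_subset_iff.mpr hc, ⟨c, rfl⟩,
    fun b hb => Or.inl (by rw [show b = c from hb])⟩

lemma ValidB_subset {B B' : Set V} (hB : ValidB G C I B) (hsub : B' ⊆ B)
    (hne : B'.Nonempty) : ValidB G C I B' := by
  refine ⟨hsub.trans hB.1, hne, ?_⟩
  intro b hb
  rcases hB.2.2 b (hsub hb) with hsing | ⟨x, hxI, hadj, hx⟩
  · left
    exact Set.Subset.antisymm (hsing ▸ hsub) (Set.singleton_subset_iff.mpr hb)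
  · right
    exact ⟨x, hxI, hadj, fun b' hb' h => hx b' (hsub hb') h⟩

include hdisj in
lemma edge_insert {B : Set V} {c : V} (hcC : c ∈ C) (hcB : c ∉ B) :
    ReconfigAdj G (FB G I B) (FB G I (insert c B)) ∧ FB G I B ≠ FB G I (insert c B) := by
  have hcM1 : c ∉ FB G I B := by
    rintro (h | h)
    · exact hcB h
    · exact not_mem_I hdisj hcC h.1
  have hdiff : FB G I (insert c B) \ FB G I B = {c} := by
    apply Set.Subset.antisymm
    · rintro x ⟨hx2, hx1⟩
      rcases hx2 with hx2 | hx2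
      · rcases hx2 with rfl | hx2
        · rfl
        · exact absurd (Or.inl hx2) hx1
      · exact absurd (Or.inr ⟨hx2.1, fun b hb => hx2.2 b (Set.mem_insert_of_mem c hb)⟩) hx1
    · rintro x rfl
      exact ⟨Or.inl (Set.mem_insert _ B), hcM1⟩
  have hsub : FB G I B \ FB G I (insert c B) ⊆ G.neighborSet c := by
    rintro x ⟨hx1, hx2⟩
    rcases hx1 with hx1 | hx1
    · exact absurd (Or.inl (Set.mem_insert_of_mem c hx1)) hx2
    · by_cases hadj : G.Adj c x
      · exact hadj
      · exfalso
        apply hx2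
        refine Or.inr ⟨hx1.1, ?_⟩
        rintro b (rfl | hb)
        · exact hadj
        · exact hx1.2 b hb
  refine ⟨⟨c, Or.inl ⟨hdiff, hsub⟩⟩, ?_⟩
  intro h
  exact hcM1 (by rw [h]; exact Or.inl (Set.mem_insert c B))

include hdisj hC in
lemma edge_single {b c : V} (hbC : b ∈ C) (hcC : c ∈ C) (hbc : b ≠ c)
    (h : ∀ x ∈ I, G.Adj b x → G.Adj c x) :
    ReconfigAdj G (FB G I {b}) (FB G I {c}) ∧ FB G I {b} ≠ FB G I {c} := by
  have hcM1 : c ∉ FB G I {b} := by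
    rintro (h' | h')
    · exact hbc ((Set.eq_of_mem_singleton h').symm)
    · exact not_mem_I hdisj hcC h'.1
  have hdiff : FB G I {c} \ FB G I {b} = {c} := by
    apply Set.Subset.antisymm
    · rintro x ⟨hx2, hx1⟩
      rcases hx2 with hx2 | hx2
      · exact hx2
      · exfalso
        apply hx1
        refine Or.inr ⟨hx2.1, ?_⟩
        rintro b' rfl
        intro hadj
        exact hx2.2 c rfl (h x hx2.1 hadj)
    · rintro x rfl
      exact ⟨Or.inl rfl, hcM1⟩
  have hsub : FB G I {b} \ FB G I {c} ⊆ G.neighborSet c := by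
    rintro x ⟨hx1, hx2⟩
    rcases hx1 with hx1 | hx1
    · rw [Set.eq_of_mem_singleton hx1]
      exact hC hcC hbC (Ne.symm hbc)
    · by_cases hadj : G.Adj c x
      · exact hadj
      · exfalso
        apply hx2
        refine Or.inr ⟨hx1.1, ?_⟩
        rintro b' rfl
        exact fun h' => hadj h'
  refine ⟨⟨c, Or.inl ⟨hdiff, hsub⟩⟩, ?_⟩
  intro h'
  exact hcM1 (by rw [h']; exact Or.inl rfl)

include hdisj in
lemma edge_I {c : V} (hcC : c ∈ C) :
    ReconfigAdj G I (FB G I {c}) ∧ I ≠ FB G I {c} := by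
  have hcI : c ∉ I := not_mem_I hdisj hcC
  have hdiff : FB G I {c} \ I = {c} := by
    apply Set.Subset.antisymm
    · rintro x ⟨hx2, hx1⟩
      rcases hx2 with hx2 | hx2
      · exact hx2
      · exact absurd hx2.1 hx1
    · rintro x rfl
      exact ⟨Or.inl rfl, hcI⟩
  have hsub : I \ FB G I {c} ⊆ G.neighborSet c := by
    rintro x ⟨hx1, hx2⟩
    by_cases hadj : G.Adj c x
    · exact hadj
    · exfalso
      apply hx2
      refine Or.inr ⟨hx1, ?_⟩
      rintro b' rfl
      exact fun h' => hadj h'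
  refine ⟨⟨c, Or.inl ⟨hdiff, hsub⟩⟩, ?_⟩
  intro h'
  exact hcI (by rw [h']; exact Or.inl rfl)

lemma card_le [Fintype V] {B : Set V} (hB : ValidB G C I B) (h2 : 2 ≤ B.ncard) :
    B.ncard ≤ I.ncard := by
  classical
  have hpriv : ∀ b, ∃ x, b ∈ B → x ∈ I ∧ G.Adj b x ∧ ∀ b' ∈ B, G.Adj b' x → b' = b := by
    intro b
    by_cases hb : b ∈ B
    · rcases hB.2.2 b hb with hsing | ⟨x, hxI, hadj, hx⟩
      · exfalso
        rw [hsing, Set.ncard_singleton] at h2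
        omega
      · exact ⟨x, fun _ => ⟨hxI, hadj, hx⟩⟩
    · exact ⟨b, fun h => absurd h hb⟩
  choose f hf using hpriv
  apply Set.ncard_le_ncard_of_injOn f
  · intro a ha
    exact (hf a ha).1
  · intro a ha b hb heq
    exact (hf b hb).2.2 a ha (heq ▸ (hf a ha).2.1)

/-- Helper to turn raw edge data into an adjacency in `ReconfigGraph`. -/
lemma adj_of_vals {M₁ M₂ : {S : Set V // IsMinDomSet G S}} {S T : Set V}
    (h1 : M₁.1 = S) (h2 : M₂.1 = T)
    (h : ReconfigAdj G S T ∧ S ≠ T) : (ReconfigGraph G).Adj M₁ M₂ := by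
  constructor
  · intro he
    apply h.2
    rw [← h1, ← h2, he]
  · rw [h1, h2]
    exact h.1

include hUnion hdisj hC hI in
lemma chain [Fintype V] (n : ℕ) :
    ∀ (B : Set V), ValidB G C I B → ∀ b ∈ B, B.ncard ≤ n + 1 →
    ∀ (M₁ M₂ : {S : Set V // IsMinDomSet G S}),
      M₁.1 = FB G I B → M₂.1 = FB G I {b} →
      (ReconfigGraph G).edist M₁ M₂ ≤ (n : ℕ∞) := by
  induction n with
  | zero =>
    intro B hB b hb hcard M₁ M₂ h1 h2
    have hcard1 : B.ncard = 1 := by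
      have := (Set.ncard_pos (Set.toFinite B)).mpr ⟨b, hb⟩
      omega
    obtain ⟨a, ha⟩ := Set.ncard_eq_one.mp hcard1
    have hab : B = {b} := by
      rw [ha] at hb ⊢
      rw [show b = a from hb]
    have : M₁ = M₂ := Subtype.ext (by rw [h1, h2, hab])
    rw [this, SimpleGraph.edist_self]
    exact zero_le
  | succ n ih =>
    intro B hB b hb hcard M₁ M₂ h1 h2
    by_cases hsing : B = {b}
    · have : M₁ = M₂ := Subtype.ext (by rw [h1, h2, hsing])
      rw [this, SimpleGraph.edist_self]
      exact zero_le
    · obtain ⟨b', hb'B, hb'ne⟩ := exists_other hb hsing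
      set B' := B \ {b'} with hB'def
      have hbB' : b ∈ B' := ⟨hb, fun h => hb'ne (by rw [← Set.eq_of_mem_singleton h])⟩
      have hne' : B'.Nonempty := ⟨b, hbB'⟩
      have hvB' : ValidB G C I B' := ValidB_subset hB Set.diff_subset hne'
      have hins : insert b' B' = B := by
        rw [hB'def, Set.insert_diff_singleton, Set.insert_eq_self.mpr hb'B]
      have hcard' : B'.ncard ≤ n + 1 := by
        have := Set.ncard_diff_singleton_add_one hb'B (Set.toFinite B)
        rw [← hB'def] at this
        omega
      set Mmid : {S : Set V // IsMinDomSet G S} :=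
        ⟨FB G I B', FB_mds hUnion hdisj hC hI hvB'⟩ with hMmid
      have hb'notin : b' ∉ B' := by
        rw [hB'def]
        exact fun h => h.2 rfl
      have hedge := edge_insert (G := G) (I := I) hdisj (hB.1 hb'B) hb'notin
      rw [hins] at hedge
      have hadj : (ReconfigGraph G).Adj M₁ Mmid :=
        ((adj_of_vals (M₁ := Mmid) (M₂ := M₁) rfl h1 hedge)).symm
      have hd1 : (ReconfigGraph G).edist M₁ Mmid ≤ 1 :=
        (SimpleGraph.edist_eq_one_iff_adj.mpr hadj).le
      have hd2 : (ReconfigGraph G).edist Mmid M₂ ≤ (n : ℕ∞) :=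
        ih B' hvB' b hbB' hcard' Mmid M₂ rfl h2
      calc (ReconfigGraph G).edist M₁ M₂
          ≤ (ReconfigGraph G).edist M₁ Mmid + (ReconfigGraph G).edist Mmid M₂ :=
            SimpleGraph.edist_triangle
        _ ≤ 1 + (n : ℕ∞) := add_le_add hd1 hd2
        _ = ((n + 1 : ℕ) : ℕ∞) := by push_cast; ring

include hUnion hdisj hC hI in
lemma single_dist [Fintype V] {b c : V} (hbC : b ∈ C) (hcC : c ∈ C)
    (M₁ M₂ : {S : Set V // IsMinDomSet G S})
    (h1 : M₁.1 = FB G I {b}) (h2 : M₂.1 = FB G I {c}) :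
    (ReconfigGraph G).edist M₁ M₂ ≤ 2 := by
  by_cases hbc : b = c
  · have : M₁ = M₂ := Subtype.ext (by rw [h1, h2, hbc])
    rw [this, SimpleGraph.edist_self]
    exact zero_le
  by_cases hf : ∀ x ∈ I, G.Adj b x → G.Adj c x
  · have hadj : (ReconfigGraph G).Adj M₁ M₂ :=
      adj_of_vals h1 h2 (edge_single hdisj hC hbC hcC hbc hf)
    exact (SimpleGraph.edist_eq_one_iff_adj.mpr hadj).le.trans (by norm_num)
  by_cases hg : ∀ x ∈ I, G.Adj c x → G.Adj b x
  · have hadj : (ReconfigGraph G).Adj M₂ M₁ :=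
      adj_of_vals h2 h1 (edge_single hdisj hC hcC hbC (Ne.symm hbc) hg)
    rw [SimpleGraph.edist_comm]
    exact (SimpleGraph.edist_eq_one_iff_adj.mpr hadj).le.trans (by norm_num)
  push_neg at hf hg
  obtain ⟨x, hxI, hbx, hcx⟩ := hf
  obtain ⟨y, hyI, hcy, hby⟩ := hg
  have hvmid : ValidB G C I (insert c {b}) := by
    refine ⟨?_, ⟨c, Set.mem_insert c {b}⟩, ?_⟩
    · intro z hz
      rcases hz with rfl | hz
      · exact hcC
      · rw [Set.eq_of_mem_singleton hz]; exact hbC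
    · rintro z (rfl | hz)
      · right
        refine ⟨y, hyI, hcy, ?_⟩
        rintro b' (rfl | hb') hadj
        · rfl
        · rw [Set.eq_of_mem_singleton hb'] at hadj
          exact absurd hadj hby
      · rw [Set.eq_of_mem_singleton hz]
        right
        refine ⟨x, hxI, hbx, ?_⟩
        rintro b' (rfl | hb') hadj
        · exact absurd hadj hcx
        · exact Set.eq_of_mem_singleton hb'
  set Mmid : {S : Set V // IsMinDomSet G S} :=
    ⟨FB G I (insert c {b}), FB_mds hUnion hdisj hC hI hvmid⟩ with hMmid
  have he1 := edge_insert (G := G) (I := I) hdisj (B := {b}) (c := c) hcC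
    (fun h => hbc (Set.eq_of_mem_singleton h).symm)
  have he2 := edge_insert (G := G) (I := I) hdisj (B := {c}) (c := b) hbC
    (fun h => hbc (Set.eq_of_mem_singleton h))
  rw [show (insert b {c} : Set V) = insert c {b} from Set.pair_comm b c] at he2
  have hadj1 : (ReconfigGraph G).Adj M₁ Mmid := adj_of_vals h1 rfl he1
  have hadj2 : (ReconfigGraph G).Adj Mmid M₂ :=
    ((adj_of_vals h2 rfl he2)).symm
  calc (ReconfigGraph G).edist M₁ M₂
      ≤ (ReconfigGraph G).edist M₁ Mmid + (ReconfigGraph G).edist Mmid M₂ :=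
        SimpleGraph.edist_triangle
    _ ≤ 1 + 1 := add_le_add (SimpleGraph.edist_eq_one_iff_adj.mpr hadj1).le
        (SimpleGraph.edist_eq_one_iff_adj.mpr hadj2).le
    _ = 2 := by norm_num

end Aux

/-- The reconfiguration graph of a split graph is connected with diameter at most
`2|I_G| + 1`. -/
theorem stmt16 {V : Type*} [Fintype V] (G : SimpleGraph V)
    (C I : Set V) (hUnion : C ∪ I = Set.univ) (hdisj : C ∩ I = ∅)
    (hC : G.IsClique C) (hI : ∀ u ∈ I, ∀ w ∈ I, ¬ G.Adj u w) :
    (ReconfigGraph G).Connected ∧ (ReconfigGraph G).diam ≤ 2 * I.ncard + 1 := by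
  classical
  set n := I.ncard with hn
  have chainb : ∀ (B : Set V), ValidB G C I B → ∀ b ∈ B,
      ∀ (M Mb : {S : Set V // IsMinDomSet G S}), M.1 = FB G I B → Mb.1 = FB G I {b} →
      (ReconfigGraph G).edist M Mb ≤ ((n - 1 : ℕ) : ℕ∞) := by
    intro B hB b hb M Mb hM hMb
    have hcard : B.ncard ≤ (n - 1) + 1 := by
      by_cases hsmall : B.ncard ≤ 1
      · omega
      · have h2 : 2 ≤ B.ncard := by omega
        have := card_le hB h2
        omega
    exact chain hUnion hdisj hC hI (n - 1) B hB b hb hcard M Mb hM hMb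
  have halfI : ∀ (M₁ M₂ : {S : Set V // IsMinDomSet G S}), M₁.1 ∩ C = ∅ →
      (ReconfigGraph G).edist M₁ M₂ ≤ ((2 * n + 1 : ℕ) : ℕ∞) := by
    intro M₁ M₂ hM1
    have hM1I : M₁.1 = I := mds_CI_empty hUnion hI M₁.2 hM1
    by_cases hM2 : (M₂.1 ∩ C).Nonempty
    · obtain ⟨hM2eq, hvB2⟩ := mds_structure hUnion hdisj hC hI M₂.2 hM2
      obtain ⟨b₂, hb₂⟩ := hvB2.2.1
      have hb₂C : b₂ ∈ C := hvB2.1 hb₂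
      set Mb : {S : Set V // IsMinDomSet G S} :=
        ⟨FB G I {b₂}, FB_mds hUnion hdisj hC hI (validb_singleton hb₂C)⟩ with hMb
      have hadj : (ReconfigGraph G).Adj M₁ Mb := adj_of_vals hM1I rfl (edge_I hdisj hb₂C)
      have hd2 : (ReconfigGraph G).edist Mb M₂ ≤ ((n - 1 : ℕ) : ℕ∞) := by
        rw [SimpleGraph.edist_comm]
        exact chainb _ hvB2 b₂ hb₂ M₂ Mb hM2eq rfl
      calc (ReconfigGraph G).edist M₁ M₂
          ≤ (ReconfigGraph G).edist M₁ Mb + (ReconfigGraph G).edist Mb M₂ :=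
            SimpleGraph.edist_triangle
        _ ≤ ((1 : ℕ) : ℕ∞) + ((n - 1 : ℕ) : ℕ∞) := by
            refine add_le_add ?_ hd2
            exact_mod_cast (SimpleGraph.edist_eq_one_iff_adj.mpr hadj).le
        _ = ((1 + (n - 1) : ℕ) : ℕ∞) := by push_cast; ring
        _ ≤ ((2 * n + 1 : ℕ) : ℕ∞) := Nat.cast_le.mpr (by omega)
    · rw [Set.not_nonempty_iff_eq_empty] at hM2
      have hM2I : M₂.1 = I := mds_CI_empty hUnion hI M₂.2 hM2
      have : M₁ = M₂ := Subtype.ext (by rw [hM1I, hM2I])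
      rw [this, SimpleGraph.edist_self]
      exact zero_le
  have key : ∀ M₁ M₂ : {S : Set V // IsMinDomSet G S},
      (ReconfigGraph G).edist M₁ M₂ ≤ ((2 * n + 1 : ℕ) : ℕ∞) := by
    intro M₁ M₂
    by_cases h1 : (M₁.1 ∩ C).Nonempty
    · by_cases h2 : (M₂.1 ∩ C).Nonempty
      · obtain ⟨hM1eq, hvB1⟩ := mds_structure hUnion hdisj hC hI M₁.2 h1
        obtain ⟨hM2eq, hvB2⟩ := mds_structure hUnion hdisj hC hI M₂.2 h2
        obtain ⟨b₁, hb₁⟩ := hvB1.2.1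
        obtain ⟨b₂, hb₂⟩ := hvB2.2.1
        have hb₁C : b₁ ∈ C := hvB1.1 hb₁
        have hb₂C : b₂ ∈ C := hvB2.1 hb₂
        set Mb₁ : {S : Set V // IsMinDomSet G S} :=
          ⟨FB G I {b₁}, FB_mds hUnion hdisj hC hI (validb_singleton hb₁C)⟩ with hMb₁
        set Mb₂ : {S : Set V // IsMinDomSet G S} :=
          ⟨FB G I {b₂}, FB_mds hUnion hdisj hC hI (validb_singleton hb₂C)⟩ with hMb₂
        have hd1 : (ReconfigGraph G).edist M₁ Mb₁ ≤ ((n - 1 : ℕ) : ℕ∞) :=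
          chainb _ hvB1 b₁ hb₁ M₁ Mb₁ hM1eq rfl
        have hd3 : (ReconfigGraph G).edist Mb₂ M₂ ≤ ((n - 1 : ℕ) : ℕ∞) := by
          rw [SimpleGraph.edist_comm]
          exact chainb _ hvB2 b₂ hb₂ M₂ Mb₂ hM2eq rfl
        have hmain : ∀ d : ℕ, (ReconfigGraph G).edist Mb₁ Mb₂ ≤ ((d : ℕ) : ℕ∞) →
            (n - 1) + (d + (n - 1)) ≤ 2 * n + 1 →
            (ReconfigGraph G).edist M₁ M₂ ≤ ((2 * n + 1 : ℕ) : ℕ∞) := by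
          intro d hmid harith
          calc (ReconfigGraph G).edist M₁ M₂
              ≤ (ReconfigGraph G).edist M₁ Mb₁ + (ReconfigGraph G).edist Mb₁ M₂ :=
                SimpleGraph.edist_triangle
            _ ≤ (ReconfigGraph G).edist M₁ Mb₁ +
                ((ReconfigGraph G).edist Mb₁ Mb₂ + (ReconfigGraph G).edist Mb₂ M₂) :=
                add_le_add_right SimpleGraph.edist_triangle _
            _ ≤ ((n - 1 : ℕ) : ℕ∞) + (((d : ℕ) : ℕ∞) + ((n - 1 : ℕ) : ℕ∞)) :=
                add_le_add hd1 (add_le_add hmid hd3)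
            _ = (((n - 1) + (d + (n - 1)) : ℕ) : ℕ∞) := by push_cast; ring
            _ ≤ ((2 * n + 1 : ℕ) : ℕ∞) := Nat.cast_le.mpr harith
        by_cases hIe : I = ∅
        · have hn0 : n = 0 := by rw [hn, hIe, Set.ncard_empty]
          have hmid : (ReconfigGraph G).edist Mb₁ Mb₂ ≤ ((1 : ℕ) : ℕ∞) := by
            by_cases hbb : b₁ = b₂
            · have : Mb₁ = Mb₂ := Subtype.ext
                (show FB G I {b₁} = FB G I {b₂} by rw [hbb])
              rw [this, SimpleGraph.edist_self]
              exact zero_le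
            · have hadj : (ReconfigGraph G).Adj Mb₁ Mb₂ := adj_of_vals rfl rfl
                (edge_single hdisj hC hb₁C hb₂C hbb
                  (by rw [hIe]; exact fun x hx => absurd hx (Set.notMem_empty x)))
              exact_mod_cast (SimpleGraph.edist_eq_one_iff_adj.mpr hadj).le
          exact hmain 1 hmid (by omega)
        · have hn1 : 1 ≤ n := by
            have h' := (Set.ncard_pos (Set.toFinite I)).mpr
              (Set.nonempty_iff_ne_empty.mpr hIe)
            omega
          have hmid : (ReconfigGraph G).edist Mb₁ Mb₂ ≤ ((2 : ℕ) : ℕ∞) := by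
            exact_mod_cast single_dist hUnion hdisj hC hI hb₁C hb₂C Mb₁ Mb₂ rfl rfl
          exact hmain 2 hmid (by omega)
      · rw [Set.not_nonempty_iff_eq_empty] at h2
        rw [SimpleGraph.edist_comm]
        exact halfI M₂ M₁ h2
    · rw [Set.not_nonempty_iff_eq_empty] at h1
      exact halfI M₁ M₂ h1
  have hne : Nonempty {S : Set V // IsMinDomSet G S} := by
    rcases Set.eq_empty_or_nonempty C with hCe | ⟨c, hc⟩
    · have hIuniv : I = Set.univ := by rw [← hUnion, hCe, Set.empty_union]
      refine ⟨⟨I, ⟨fun v => Or.inl (by rw [hIuniv]; trivial), ?_⟩⟩⟩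
      intro v hv hdom
      rcases hdom v with h | ⟨u, ⟨huI, hune⟩, hadj⟩
      · exact h.2 rfl
      · exact hI v hv u huI hadj
    · exact ⟨⟨FB G I {c}, FB_mds hUnion hdisj hC hI (validb_singleton hc)⟩⟩
  constructor
  · haveI := hne
    exact ⟨fun M₁ M₂ => SimpleGraph.reachable_of_edist_ne_top
      (ne_top_of_le_ne_top (ENat.coe_ne_top _) (key M₁ M₂))⟩
  · have hed : (ReconfigGraph G).ediam ≤ ((2 * n + 1 : ℕ) : ℕ∞) :=
      SimpleGraph.ediam_le_of_edist_le key
    exact ENat.toNat_le_of_le_coe hed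
end

section
/- Let G and H be finite simple graphs of equal order with minimum degree δ(G) ≥ 2 and δ(H) ≥ 1, let f : V(G) → V(H) be a bijection, and let M(G,H) be the graph on the disjoint union of V(G) and V(H) whose edges are the edges of G, the edges of H, and the matching edges {g, f(g)} for each g ∈ V(G). Then V(G) is a minimal dominating set of M(G,H), and V(G) is an isolated vertex of the reconfiguration graph R(M(G,H)) (it is adjacent to no other minimal dominating set). -/
/-- The graph formed from copies of `G` and `H` joined by the perfect matching `f`. -/
def matchJoin {α β : Type*} (G : SimpleGraph α) (H : SimpleGraph β) (f : α ≃ β) :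
    SimpleGraph (α ⊕ β) where
  Adj x y := match x, y with
    | .inl a, .inl b => G.Adj a b
    | .inr a, .inr b => H.Adj a b
    | .inl a, .inr b => b = f a
    | .inr a, .inl b => a = f b
  symm := by
    constructor
    rintro (a | a) (b | b) h
    · exact G.adj_symm h
    · exact h
    · exact h
    · exact H.adj_symm h
  loopless := by
    constructor
    rintro (a | a) h
    · exact G.loopless.irrefl _ h
    · exact H.loopless.irrefl _ h

/-- If `δ(G) ≥ 2` and `δ(H) ≥ 1`, then `V(G)` is a minimal dominating set of `M(G,H)` which
is an isolated vertex of the reconfiguration graph `R(M(G,H))`. -/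
theorem stmt17 {α β : Type*} [Fintype α] [Fintype β]
    (G : SimpleGraph α) (H : SimpleGraph β) (f : α ≃ β)
    (hG : ∀ v : α, ∃ u w : α, u ≠ w ∧ G.Adj v u ∧ G.Adj v w)
    (hH : ∀ v : β, ∃ u : β, H.Adj v u) :
    ∃ h : IsMinDomSet (matchJoin G H f) (Set.range Sum.inl),
      ∀ N : {S : Set (α ⊕ β) // IsMinDomSet (matchJoin G H f) S},
        ¬ (ReconfigGraph (matchJoin G H f)).Adj ⟨Set.range Sum.inl, h⟩ N := by

  classical
  have hdomM : IsDomSet (matchJoin G H f) (Set.range Sum.inl) := by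
    rintro (a | b)
    · exact Or.inl ⟨a, rfl⟩
    · refine Or.inr ⟨Sum.inl (f.symm b), ⟨f.symm b, rfl⟩, ?_⟩
      show b = f (f.symm b)
      simp
  have hmono : ∀ S T : Set (α ⊕ β), S ⊆ T → IsDomSet (matchJoin G H f) S →
      IsDomSet (matchJoin G H f) T := by
    intro S T hST hS v
    rcases hS v with h | ⟨u, hu, hadj⟩
    · exact Or.inl (hST h)
    · exact Or.inr ⟨u, hST hu, hadj⟩
  have hmin : IsMinDomSet (matchJoin G H f) (Set.range Sum.inl) := by
    refine ⟨hdomM, ?_⟩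
    rintro v ⟨a, rfl⟩ hdom
    rcases hdom (Sum.inr (f a)) with h | ⟨u, hu, hadj⟩
    · rcases h.1 with ⟨x, hx⟩
      exact absurd hx (by simp)
    · obtain ⟨⟨x, rfl⟩, hx⟩ := hu
      have hfe : f a = f x := hadj
      have : x = a := f.injective hfe.symm
      exact hx (by simp [this])
  -- the key lemma: (V(G) \ {a}) ∪ {f a} is never a minimal dominating set
  have key : ∀ a : α, ¬ IsMinDomSet (matchJoin G H f)
      ((Set.range Sum.inl \ {Sum.inl a}) ∪ {Sum.inr (f a)}) := by
    intro a hm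
    obtain ⟨c, hc⟩ := hH (f a)
    set a' := f.symm c with ha'def
    have hcne : c ≠ f a := hc.ne'
    have ha'ne : a' ≠ a := by
      intro h
      apply hcne
      rw [← f.apply_symm_apply c, ← ha'def, h]
    have hmem : Sum.inl a' ∈ (Set.range Sum.inl \ {Sum.inl a}) ∪ {Sum.inr (f a)} :=
      Or.inl ⟨⟨a', rfl⟩, by simp [ha'ne]⟩
    apply hm.2 (Sum.inl a') hmem
    rintro (x | b')
    · by_cases hx1 : x = a'
      · subst hx1
        obtain ⟨u, w, huw, hu, hw⟩ := hG a'
        have hex : ∃ u₀, G.Adj a' u₀ ∧ u₀ ≠ a := by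
          by_cases h : u = a
          · exact ⟨w, hw, fun heq => huw (h.trans heq.symm)⟩
          · exact ⟨u, hu, h⟩
        obtain ⟨u₀, hadj, hne⟩ := hex
        refine Or.inr ⟨Sum.inl u₀, ⟨Or.inl ⟨⟨u₀, rfl⟩, by simp [hne]⟩, ?_⟩, hadj⟩
        simp only [Set.mem_singleton_iff]
        intro h
        injection h with h
        exact hadj.ne' h
      · by_cases hx2 : x = a
        · subst hx2
          obtain ⟨u, w, huw, hu, hw⟩ := hG x
          have hex : ∃ u₀, G.Adj x u₀ ∧ u₀ ≠ a' := by
            by_cases h : u = a'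
            · exact ⟨w, hw, fun heq => huw (h.trans heq.symm)⟩
            · exact ⟨u, hu, h⟩
          obtain ⟨u₀, hadj, hne⟩ := hex
          refine Or.inr ⟨Sum.inl u₀, ⟨Or.inl ⟨⟨u₀, rfl⟩, ?_⟩, ?_⟩, hadj⟩
          · simp only [Set.mem_singleton_iff]
            intro h
            injection h with h
            exact hadj.ne' h
          · simp [hne]
        · exact Or.inl ⟨Or.inl ⟨⟨x, rfl⟩, by simp [hx2]⟩, by simp [hx1]⟩
    · by_cases hb1 : b' = f a
      · exact Or.inl ⟨Or.inr (by simp [hb1]), by simp⟩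
      · by_cases hb2 : b' = c
        · subst hb2
          exact Or.inr ⟨Sum.inr (f a), ⟨Or.inr rfl, by simp⟩, hc.symm⟩
        · refine Or.inr ⟨Sum.inl (f.symm b'), ⟨Or.inl ⟨⟨_, rfl⟩, ?_⟩, ?_⟩, ?_⟩
          · simp only [Set.mem_singleton_iff]
            intro h
            injection h with h
            exact hb1 (f.symm_apply_eq.mp h)
          · simp only [Set.mem_singleton_iff]
            intro h
            injection h with h
            rw [ha'def] at h
            exact hb2 (f.symm.injective h)
          · show b' = f (f.symm b')
            simp
  refine ⟨hmin, ?_⟩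
  rintro ⟨N, hN⟩ ⟨hne, v, hcase⟩
  rcases hcase with ⟨hNv, hsub⟩ | ⟨hMv, hsub⟩
  · -- N \ V(G) = {v}
    have hv : v ∈ N \ Set.range Sum.inl := by rw [hNv]; rfl
    obtain (a0 | b) := v
    · exact hv.2 ⟨a0, rfl⟩
    · by_cases hin : Sum.inl (f.symm b) ∈ N
      · -- then V(G) ⊆ N, so N ⊇ V(G) ∪ {inr b} is not minimal
        have hMsub : Set.range Sum.inl ⊆ N := by
          rintro x ⟨y, rfl⟩
          by_contra hxn
          have hxd : Sum.inl y ∈ Set.range Sum.inl \ N := ⟨⟨y, rfl⟩, hxn⟩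
          have hadj := hsub hxd
          have hbe : b = f y := hadj
          have : y = f.symm b := by rw [hbe]; simp
          rw [this] at hxn
          exact hxn hin
        apply hN.2 (Sum.inr b) hv.1
        apply hmono (Set.range Sum.inl) _ _ hdomM
        rintro x ⟨y, rfl⟩
        exact ⟨hMsub ⟨y, rfl⟩, by simp⟩
      · have hNeq : N = (Set.range Sum.inl \ {Sum.inl (f.symm b)}) ∪ {Sum.inr (f (f.symm b))} := by
          ext x
          constructor
          · intro hxN
            by_cases hxM : x ∈ Set.range Sum.inl
            · obtain ⟨y, rfl⟩ := hxM
              refine Or.inl ⟨⟨y, rfl⟩, ?_⟩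
              simp only [Set.mem_singleton_iff]
              rintro h
              rw [h] at hxN
              exact hin hxN
            · have : x ∈ N \ Set.range Sum.inl := ⟨hxN, hxM⟩
              rw [hNv] at this
              simp only [Set.mem_singleton_iff] at this
              subst this
              exact Or.inr (by simp)
          · rintro (⟨⟨y, rfl⟩, hy⟩ | hx)
            · by_contra hxn
              have hxd : Sum.inl y ∈ Set.range Sum.inl \ N := ⟨⟨y, rfl⟩, hxn⟩
              have hadj := hsub hxd
              have hbe : b = f y := hadj
              apply hy
              simp only [Set.mem_singleton_iff]
              congr 1
              rw [hbe]; simp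
            · simp only [Set.mem_singleton_iff] at hx
              rw [hx]
              simpa using hv.1
        exact key (f.symm b) (hNeq ▸ hN)
  · -- V(G) \ N = {v}
    have hv : v ∈ Set.range Sum.inl \ N := by rw [hMv]; rfl
    obtain ⟨a, rfl⟩ := hv.1
    by_cases hin : Sum.inr (f a) ∈ N
    · have hNeq : N = (Set.range Sum.inl \ {Sum.inl a}) ∪ {Sum.inr (f a)} := by
        ext x
        constructor
        · intro hxN
          by_cases hxM : x ∈ Set.range Sum.inl
          · obtain ⟨y, rfl⟩ := hxM
            refine Or.inl ⟨⟨y, rfl⟩, ?_⟩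
            simp only [Set.mem_singleton_iff]
            rintro h
            rw [h] at hxN
            exact hv.2 hxN
          · have hxd : x ∈ N \ Set.range Sum.inl := ⟨hxN, hxM⟩
            have hadj := hsub hxd
            rcases x with x | b'
            · exact absurd ⟨x, rfl⟩ hxM
            · have hbe : b' = f a := hadj
              exact Or.inr (by simp [hbe])
        · rintro (⟨⟨y, rfl⟩, hy⟩ | hx)
          · by_contra hxn
            have : Sum.inl y ∈ Set.range Sum.inl \ N := ⟨⟨y, rfl⟩, hxn⟩
            rw [hMv] at this
            exact hy this
          · simp only [Set.mem_singleton_iff] at hx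
            rw [hx]
            exact hin
      exact key a (hNeq ▸ hN)
    · -- N has no dominator for inr (f a)
      rcases hN.1 (Sum.inr (f a)) with h | ⟨u, hu, hadj⟩
      · exact hin h
      · rcases u with y | b'
        · have hfe : f a = f y := hadj
          have : y = a := f.injective hfe.symm
          rw [this] at hu
          exact hv.2 hu
        · have hadj' : H.Adj (f a) b' := hadj
          have : Sum.inr b' ∈ N \ Set.range Sum.inl := ⟨hu, by rintro ⟨y, hy⟩; exact absurd hy (by simp)⟩
          have hadj2 := hsub this
          have hbe : b' = f a := hadj2
          rw [hbe] at hu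
          exact hin hu
end

section
/- If G is a finite simple graph with minimum degree δ(G) ≥ 2, then the reconfiguration graph R(G □ K₂) of the Cartesian product of G with K₂ is not connected. -/
section Aux

variable {V : Type*} (G : SimpleGraph V)

/-- The layer `V × {i}` of the prism. -/
def Layer (i : Fin 2) : Set (V × Fin 2) := {p | p.2 = i}

lemma fin2_cases (i : Fin 2) : i = 0 ∨ i = 1 := by revert i; decide

lemma layer_dom (i : Fin 2) : IsDomSet (G □ (⊤ : SimpleGraph (Fin 2))) (Layer i) := by
  intro p
  rcases eq_or_ne p.2 i with h | h
  · exact Or.inl h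
  · refine Or.inr ⟨(p.1, i), rfl, ?_⟩
    rw [SimpleGraph.boxProd_adj]
    exact Or.inr ⟨h, rfl⟩

lemma layer_minDom (i j : Fin 2) (hij : j ≠ i) :
    IsMinDomSet (G □ (⊤ : SimpleGraph (Fin 2))) (Layer i) := by
  refine ⟨layer_dom G i, ?_⟩
  rintro ⟨v, i'⟩ (hvi : i' = i) hdom
  subst hvi
  rcases hdom (v, j) with h | ⟨u, ⟨hu1, hu2⟩, hadj⟩
  · exact hij h.1
  · rw [SimpleGraph.boxProd_adj] at hadj
    rcases hadj with ⟨_, h2⟩ | ⟨_, h2⟩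
    · exact hij (h2.trans hu1)
    · exact hu2 (Prod.ext h2.symm hu1)

/-- The "swap one vertex to the other layer" set is never a minimal dominating set. -/
lemma swap_not_min (hG : ∀ v : V, ∃ u w : V, u ≠ w ∧ G.Adj v u ∧ G.Adj v w) (w : V) :
    ¬ IsMinDomSet (G □ (⊤ : SimpleGraph (Fin 2)))
      ((Layer 0 \ {((w : V), (0 : Fin 2))}) ∪ {(w, 1)}) := by
  set M : Set (V × Fin 2) := (Layer 0 \ {((w : V), (0 : Fin 2))}) ∪ {(w, 1)} with hMdef
  rintro ⟨-, hmin⟩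
  obtain ⟨u, -, -, hwu, -⟩ := hG w
  have huw : u ≠ w := fun h => (G.irrefl (h ▸ hwu))
  obtain ⟨a, b, hab, hua, hub⟩ := hG u
  obtain ⟨z, hz, huz⟩ : ∃ z, z ≠ w ∧ G.Adj u z := by
    rcases eq_or_ne a w with h | h
    · exact ⟨b, fun hb => hab (h.trans hb.symm ▸ rfl), hub⟩
    · exact ⟨a, h, hua⟩
  have hzu : z ≠ u := fun h => (G.irrefl (h ▸ huz))
  have huM : ((u : V), (0 : Fin 2)) ∈ M :=
    Or.inl ⟨rfl, fun h => huw (congrArg Prod.fst h)⟩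
  refine hmin _ huM ?_
  rintro ⟨x, k⟩
  have hwj : ((w : V), (1 : Fin 2)) ∈ M \ {(u, (0 : Fin 2))} :=
    ⟨Or.inr rfl, fun h => one_ne_zero (congrArg Prod.snd h)⟩
  rcases fin2_cases k with rfl | rfl
  · by_cases heq : x = w
    · rw [heq]
      refine Or.inr ⟨(w, 1), hwj, ?_⟩
      rw [SimpleGraph.boxProd_adj]
      exact Or.inr ⟨zero_ne_one, rfl⟩
    · by_cases heq' : x = u
      · rw [heq']
        refine Or.inr ⟨(z, 0), ⟨Or.inl ⟨rfl, fun h => hz (congrArg Prod.fst h)⟩,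
          fun h => hzu (congrArg Prod.fst h)⟩, ?_⟩
        rw [SimpleGraph.boxProd_adj]
        exact Or.inl ⟨huz, rfl⟩
      · exact Or.inl ⟨Or.inl ⟨rfl, fun h => heq (congrArg Prod.fst h)⟩,
          fun h => heq' (congrArg Prod.fst h)⟩
  · by_cases heq : x = w
    · rw [heq]
      exact Or.inl hwj
    · by_cases heq' : x = u
      · rw [heq']
        refine Or.inr ⟨(w, 1), hwj, ?_⟩
        rw [SimpleGraph.boxProd_adj]
        exact Or.inl ⟨hwu.symm, rfl⟩
      · refine Or.inr ⟨(x, 0), ⟨Or.inl ⟨rfl, fun h => heq (congrArg Prod.fst h)⟩,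
          fun h => heq' (congrArg Prod.fst h)⟩, ?_⟩
        rw [SimpleGraph.boxProd_adj]
        exact Or.inr ⟨one_ne_zero, rfl⟩

/-- The bottom layer is isolated in the reconfiguration graph. -/
lemma layer_zero_isolated (hG : ∀ v : V, ∃ u w : V, u ≠ w ∧ G.Adj v u ∧ G.Adj v w)
    (M : Set (V × Fin 2)) (hM : IsMinDomSet (G □ (⊤ : SimpleGraph (Fin 2))) M) :
    ¬ ReconfigAdj (G □ (⊤ : SimpleGraph (Fin 2))) (Layer 0) M := by
  set A : Set (V × Fin 2) := Layer 0 with hA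
  rintro ⟨v, ⟨h1, h2⟩ | ⟨h1, h2⟩⟩
  · -- M \ A = {v}, A \ M ⊆ N(v) : v is in the top layer
    have hvMA : v ∈ M \ A := h1 ▸ rfl
    have hv2 : v.2 = 1 := by
      rcases fin2_cases v.2 with h | h
      · exact absurd h hvMA.2
      · exact h
    set w := v.1 with hw
    have hvw : v = (w, 1) := Prod.ext rfl hv2
    have hsub : A \ M ⊆ {((w : V), (0 : Fin 2))} := by
      rintro ⟨x, k⟩ hp
      have hadj := h2 hp
      rw [SimpleGraph.mem_neighborSet, hvw, SimpleGraph.boxProd_adj] at hadj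
      have hk : k = 0 := hp.1
      rcases hadj with ⟨-, h⟩ | ⟨-, h⟩
      · exact absurd (h.trans hk) one_ne_zero
      · exact Set.mem_singleton_iff.mpr (Prod.ext h.symm hk)
    rcases Set.subset_singleton_iff_eq.mp hsub with hAM | hAM
    · -- A ⊆ M, so M = A ∪ {v}; removing v gives back A which dominates
      have hAsubM : A ⊆ M := Set.diff_eq_empty.mp hAM
      have hMv : M \ {v} = A := by
        apply Set.eq_of_subset_of_subset
        · rintro p ⟨hpM, hpv⟩
          by_contra hpA
          exact hpv (h1 ▸ (⟨hpM, hpA⟩ : p ∈ M \ A))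
        · intro p hp
          exact ⟨hAsubM hp, fun h => hvMA.2 (h ▸ hp)⟩
      exact hM.2 v hvMA.1 (hMv ▸ layer_dom G 0)
    · -- M = swap set
      have hMeq : M = (Layer 0 \ {((w : V), (0 : Fin 2))}) ∪ {(w, 1)} := by
        apply Set.eq_of_subset_of_subset
        · intro p hp
          by_cases hpA : p ∈ A
          · refine Or.inl ⟨hpA, fun h => ?_⟩
            have : p ∈ A \ M := hAM ▸ h
            exact this.2 hp
          · have : p ∈ M \ A := ⟨hp, hpA⟩
            rw [h1] at this
            exact Or.inr (this ▸ hvw ▸ rfl)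
        · rintro p (⟨hpA, hpw⟩ | hpv)
          · by_contra hpM
            exact hpw (hAM ▸ (⟨hpA, hpM⟩ : p ∈ A \ M))
          · have : p = v := hpv ▸ hvw.symm
            exact this ▸ hvMA.1
      exact swap_not_min G hG w (hMeq ▸ hM)
  · -- A \ M = {v} : v is in the bottom layer
    have hvAM : v ∈ A \ M := h1 ▸ rfl
    have hv2 : v.2 = 0 := hvAM.1
    set w := v.1 with hw
    have hvw : v = (w, 0) := Prod.ext rfl hv2
    have hsub : M \ A ⊆ {((w : V), (1 : Fin 2))} := by
      rintro ⟨x, k⟩ hp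
      have hadj := h2 hp
      rw [SimpleGraph.mem_neighborSet, hvw, SimpleGraph.boxProd_adj] at hadj
      have hk : k = 1 := by
        rcases fin2_cases k with h | h
        · exact absurd h hp.2
        · exact h
      rcases hadj with ⟨-, h⟩ | ⟨-, h⟩
      · exact absurd (h.trans hk) zero_ne_one
      · exact Set.mem_singleton_iff.mpr (Prod.ext h.symm hk)
    rcases Set.subset_singleton_iff_eq.mp hsub with hMA | hMA
    · -- M = A \ {v}, which is not dominating
      have hMsubA : M ⊆ A := Set.diff_eq_empty.mp hMA
      have hMeq : M = A \ {v} := by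
        apply Set.eq_of_subset_of_subset
        · intro p hp
          exact ⟨hMsubA hp, fun h => hvAM.2 (h ▸ hp)⟩
        · rintro p ⟨hpA, hpv⟩
          by_contra hpM
          exact hpv (h1 ▸ (⟨hpA, hpM⟩ : p ∈ A \ M))
      exact (layer_minDom G 0 1 one_ne_zero).2 v hvAM.1 (hMeq ▸ hM.1)
    · -- M = swap set
      have hMeq : M = (Layer 0 \ {((w : V), (0 : Fin 2))}) ∪ {(w, 1)} := by
        apply Set.eq_of_subset_of_subset
        · intro p hp
          by_cases hpA : p ∈ A
          · refine Or.inl ⟨hpA, fun h => ?_⟩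
            have : p = v := h ▸ hvw.symm
            exact hvAM.2 (this ▸ hp)
          · have : p ∈ M \ A := ⟨hp, hpA⟩
            rw [hMA] at this
            exact Or.inr this
        · rintro p (⟨hpA, hpw⟩ | hpv)
          · by_contra hpM
            have : p ∈ A \ M := ⟨hpA, hpM⟩
            rw [h1] at this
            exact hpw (this ▸ hvw ▸ rfl)
          · exact (hMA ▸ hpv : p ∈ M \ A).1
      exact swap_not_min G hG w (hMeq ▸ hM)

lemma walk_first_adj {W : Type*} (G' : SimpleGraph W) (x y : W) (p : G'.Walk x y) :
    x = y ∨ ∃ z, G'.Adj x z := by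
  cases p with
  | nil => exact Or.inl rfl
  | cons h _ => exact Or.inr ⟨_, h⟩

end Aux

/-- If `δ(G) ≥ 2`, then `R(G □ K₂)` is disconnected. -/
theorem stmt18 {V : Type*} [Fintype V] [Nonempty V] (G : SimpleGraph V)
    (hG : ∀ v : V, ∃ u w : V, u ≠ w ∧ G.Adj v u ∧ G.Adj v w) :
    ¬ (ReconfigGraph (G □ (⊤ : SimpleGraph (Fin 2)))).Connected := by
  intro hconn
  have hA : IsMinDomSet (G □ (⊤ : SimpleGraph (Fin 2))) (Layer 0) :=
    layer_minDom G 0 1 one_ne_zero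
  have hB : IsMinDomSet (G □ (⊤ : SimpleGraph (Fin 2))) (Layer 1) :=
    layer_minDom G 1 0 zero_ne_one
  have hAB : (Layer (V := V) 0) ≠ Layer 1 := by
    obtain ⟨v⟩ := ‹Nonempty V›
    intro h
    have h0 : ((v : V), (0 : Fin 2)) ∈ Layer (V := V) 0 := rfl
    rw [h] at h0
    exact zero_ne_one (h0 : (0 : Fin 2) = 1)
  have hne : (⟨Layer 0, hA⟩ : {S // IsMinDomSet (G □ (⊤ : SimpleGraph (Fin 2))) S}) ≠
      ⟨Layer 1, hB⟩ := fun h => hAB (congrArg Subtype.val h)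
  obtain ⟨p⟩ := hconn.preconnected ⟨Layer 0, hA⟩ ⟨Layer 1, hB⟩
  rcases walk_first_adj _ _ _ p with heq | ⟨z, hz⟩
  · exact hne heq
  · exact layer_zero_isolated G hG _ z.2 hz.2
end

section
/- Let G be a finite simple graph on n vertices in which every cycle has length at least 5 (G contains no 3-cycle and no 4-cycle). Then the maximum degree of the reconfiguration graph R(G) is at most n − γ(G), where γ(G) is the domination number of G; indeed, every minimal dominating set M of G has degree at most n − |M| in R(G). -/
section helpers
variable {V : Type*} {G : SimpleGraph V}

lemma domMono {S T : Set V} (h : IsDomSet G S) (hST : S ⊆ T) : IsDomSet G T := by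
  intro v
  rcases h v with hv | ⟨u, hu, huv⟩
  · exact Or.inl (hST hv)
  · exact Or.inr ⟨u, hST hu, huv⟩

lemma privVert {M' : Set V} (hM' : IsMinDomSet G M') {a : V} (ha : a ∈ M') :
    ∃ p, (p = a ∨ G.Adj p a) ∧ (p ∈ M' → p = a) ∧ ∀ u ∈ M', u ≠ a → ¬ G.Adj p u := by
  obtain ⟨hdom, hmin⟩ := hM'
  have h := hmin a ha
  unfold IsDomSet at h
  push_neg at h
  obtain ⟨p, hp1, hp2⟩ := h
  have hC : ∀ u ∈ M', u ≠ a → ¬ G.Adj p u := fun u hu hua => hp2 u ⟨hu, hua⟩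
  have hB : p ∈ M' → p = a := by
    intro hpM
    by_contra hpa
    exact hp1 ⟨hpM, hpa⟩
  refine ⟨p, ?_, hB, hC⟩
  rcases hdom p with hp | ⟨u, hu, hpu⟩
  · exact Or.inl (hB hp)
  · by_cases hua : u = a
    · exact Or.inr (hua ▸ hpu)
    · exact absurd hpu (hC u hu hua)

lemma memOfDiffEq {M M' : Set V} {w x : V} (h : M \ M' = {w}) (hx : x ∈ M) (hxw : x ≠ w) :
    x ∈ M' := by
  by_contra hx'
  exact hxw (by have : x ∈ M \ M' := ⟨hx, hx'⟩; rwa [h] at this)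

lemma selfOfDiffEq {M M' : Set V} {w : V} (h : M \ M' = {w}) : w ∈ M ∧ w ∉ M' := by
  have : w ∈ M \ M' := by rw [h]; rfl
  exact this

/-- Case both neighbours are of "addition" type, adding the same vertex `v`. -/
lemma aaAux (h3 : ∀ a b c : V, G.Adj a b → G.Adj b c → ¬ G.Adj c a)
    (h4 : ∀ a b c d : V, G.Adj a b → G.Adj b c → G.Adj c d → G.Adj d a → a = c ∨ b = d)
    {M M₁ M₂ : Set V} {v d : V}
    (hM₁ : IsMinDomSet G M₁) (hM₂ : IsMinDomSet G M₂)
    (hA1 : M₁ \ M = {v}) (hA2 : M₂ \ M = {v})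
    (hD1 : M \ M₁ ⊆ G.neighborSet v) (hD2 : M \ M₂ ⊆ G.neighborSet v)
    (hd2 : d ∈ M₂) (hd1 : d ∉ M₁) : False := by
  have hv1 : v ∈ M₁ ∧ v ∉ M := selfOfDiffEq hA1
  have hv2 : v ∈ M₂ ∧ v ∉ M := selfOfDiffEq hA2
  -- d ∈ M
  have hdM : d ∈ M := by
    by_contra hdM
    have : d ∈ M₂ \ M := ⟨hd2, hdM⟩
    rw [hA2] at this
    exact hd1 (this ▸ hv1.1)
  have hdv : d ≠ v := fun h => hv1.2 (h ▸ hdM)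
  -- d ∈ M \ M₁, so Adj v d
  have hvd : G.Adj v d := hD1 ⟨hdM, hd1⟩
  obtain ⟨p, hpN, hpB, hpC⟩ := privVert hM₂ hd2
  have hvd' : v ≠ d := fun h => hdv h.symm
  have hpv : ¬ G.Adj p v := hpC v hv2.1 hvd'
  have hpnev : p ≠ v := by
    intro h
    have hpM₂ : p ∈ M₂ := by rw [h]; exact hv2.1
    apply hvd'
    rw [← h]
    exact hpB hpM₂
  -- M₁ dominates p
  rcases hM₁.1 p with hpM₁ | ⟨x, hxM₁, hpx⟩
  · -- p ∈ M₁
    have hpM : p ∈ M := by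
      by_contra hpM
      have : p ∈ M₁ \ M := ⟨hpM₁, hpM⟩
      rw [hA1] at this
      exact hpnev this
    have hpM₂ : p ∉ M₂ := by
      intro h
      have := hpB h
      exact hd1 (this ▸ hpM₁)
    exact hpv ((hD2 ⟨hpM, hpM₂⟩)).symm
  · -- p has a neighbour x in M₁
    have hxv : x ≠ v := fun h => hpv (h ▸ hpx)
    have hxM : x ∈ M := by
      by_contra hxM
      have : x ∈ M₁ \ M := ⟨hxM₁, hxM⟩
      rw [hA1] at this
      exact hxv this
    have hxM₂ : x ∉ M₂ := by
      intro h
      have hxd : x ≠ d := fun he => hd1 (he ▸ hxM₁)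
      exact hpC x h hxd hpx
    have hvx : G.Adj v x := hD2 ⟨hxM, hxM₂⟩
    rcases hpN with hpd | hpd
    · -- p = d : triangle x v d
      rw [hpd] at hpx
      exact h3 x v d hvx.symm hvd hpx
    · -- 4-cycle v x p d
      rcases h4 v x p d hvx hpx.symm hpd hvd.symm with h | h
      · exact hpnev h.symm
      · exact hxM₂ (h ▸ hd2)

/-- Mixed case: `M₁` of addition type (adds `v`), `M₂` of removal type (removes `w`). -/
lemma abAux (h3 : ∀ a b c : V, G.Adj a b → G.Adj b c → ¬ G.Adj c a)
    (h4 : ∀ a b c d : V, G.Adj a b → G.Adj b c → G.Adj c d → G.Adj d a → a = c ∨ b = d)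
    {M M₁ M₂ : Set V} {v w : V}
    (hM : IsMinDomSet G M) (hM₁ : IsMinDomSet G M₁) (hM₂ : IsMinDomSet G M₂)
    (h12 : M₁ ≠ M₂)
    (hA1 : M₁ \ M = {v}) (hD1 : M \ M₁ ⊆ G.neighborSet v)
    (hB2 : M \ M₂ = {w}) (hAs2 : M₂ \ M ⊆ G.neighborSet w)
    (hvM₂ : v ∈ M₂) : False := by
  have hv1 : v ∈ M₁ ∧ v ∉ M := selfOfDiffEq hA1
  have hw : w ∈ M ∧ w ∉ M₂ := selfOfDiffEq hB2
  have hwv : G.Adj w v := hAs2 ⟨hvM₂, hv1.2⟩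
  have hwnev : w ≠ v := fun h => hv1.2 (h ▸ hw.1)
  by_cases hwM₁ : w ∈ M₁
  · -- w ∈ M₁
    obtain ⟨q, hqN, hqB, hqC⟩ := privVert hM₁ hv1.1
    have hqw : ¬ G.Adj q w := hqC w hwM₁ hwnev
    have hq : G.Adj q v := by
      rcases hqN with h | h
      · exact absurd (show G.Adj q w by rw [h]; exact hwv.symm) hqw
      · exact h
    by_cases hqM : q ∈ M
    · -- q ∈ M, q ∉ M₁ (else q = v ∉ M)
      have hqM₁ : q ∉ M₁ := by
        intro h
        exact hv1.2 ((hqB h) ▸ hqM)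
      have hqw' : q ≠ w := fun h => hqM₁ (h ▸ hwM₁)
      have hqM₂ : q ∈ M₂ := memOfDiffEq hB2 hqM hqw'
      obtain ⟨r, hrN, hrB, hrC⟩ := privVert hM₂ hqM₂
      have hvq : v ≠ q := fun h => hv1.2 (h ▸ hqM)
      have hrv : ¬ G.Adj r v := hrC v hvM₂ hvq
      have hrq : G.Adj r q := by
        rcases hrN with h | h
        · exact absurd (show G.Adj r v by rw [h]; exact hq) hrv
        · exact h
      have hrnev : r ≠ v := by
        intro h
        have : r ∈ M₂ := by rw [h]; exact hvM₂
        apply hvq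
        rw [← h]
        exact hrB this
      have hrnotM : ∀ y ∈ M, (r = y ∨ G.Adj r y) → y = q := by
        intro y hyM hy
        by_contra hyq
        by_cases hyw : y = w
        · rw [hyw] at hy
          rcases hy with h | h
          · exact hrv (by rw [h]; exact hwv)
          · -- 4-cycle v q r w
            rcases h4 v q r w hq.symm hrq.symm h hwv with he | he
            · exact hrnev he.symm
            · exact hyq (hyw.trans he.symm)
        · have hyM₂ : y ∈ M₂ := memOfDiffEq hB2 hyM hyw
          rcases hy with h | h
          · have : r ∈ M₂ := by rw [h]; exact hyM₂
            exact hyq (by rw [← h]; exact hrB this)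
          · exact hrC y hyM₂ hyq h
      -- r ∉ M essentially; now M₁ must dominate r
      rcases hM₁.1 r with hrM₁ | ⟨x, hxM₁, hrx⟩
      · -- r ∈ M₁
        by_cases hrM : r ∈ M
        · have := hrnotM r hrM (Or.inl rfl)
          exact hrq.ne (this)
        · have : r ∈ M₁ \ M := ⟨hrM₁, hrM⟩
          rw [hA1] at this
          exact hrnev this
      · have hxv : x ≠ v := fun h => hrv (h ▸ hrx)
        have hxM : x ∈ M := by
          by_contra hxM
          have : x ∈ M₁ \ M := ⟨hxM₁, hxM⟩
          rw [hA1] at this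
          exact hxv this
        have := hrnotM x hxM (Or.inr hrx)
        exact hqM₁ (this ▸ hxM₁)
    · -- q ∉ M : M dominates q via some y
      rcases hM.1 q with h | ⟨y, hyM, hqy⟩
      · exact hqM h
      · by_cases hyM₁ : y ∈ M₁
        · have hyv : y ≠ v := fun h => hv1.2 (h ▸ hyM)
          exact hqC y hyM₁ hyv hqy
        · -- y ∈ M \ M₁ ⊆ N(v): triangle v y q
          have hvy : G.Adj v y := hD1 ⟨hyM, hyM₁⟩
          exact h3 v y q hvy hqy.symm hq
  · -- w ∉ M₁
    -- Step 1: M₂ \ M ⊆ {v}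
    have hstep1 : ∀ a ∈ M₂, a ∉ M → a = v := by
      intro a haM₂ haM
      by_contra hav
      have hwa : G.Adj w a := hAs2 ⟨haM₂, haM⟩
      -- M₁ dominates a
      rcases hM₁.1 a with haM₁ | ⟨x, hxM₁, hax⟩
      · have : a ∈ M₁ \ M := ⟨haM₁, haM⟩
        rw [hA1] at this
        exact hav this
      · by_cases hxv : x = v
        · rw [hxv] at hax
          exact h3 w a v hwa hax hwv.symm
        · have hxM : x ∈ M := by
            by_contra hxM
            have : x ∈ M₁ \ M := ⟨hxM₁, hxM⟩
            rw [hA1] at this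
            exact hxv this
          have hxw : x ≠ w := fun h => hwM₁ (h ▸ hxM₁)
          have hxM₂ : x ∈ M₂ := memOfDiffEq hB2 hxM hxw
          obtain ⟨p, hpN, hpB, hpC⟩ := privVert hM₂ haM₂
          have hxa : x ≠ a := fun h => haM (h ▸ hxM)
          have hpx : ¬ G.Adj p x := hpC x hxM₂ hxa
          have hpa : G.Adj p a := by
            rcases hpN with h | h
            · exact absurd (show G.Adj p x by rw [h]; exact hax) hpx
            · exact h
          have hva : v ≠ a := fun h => hav h.symm
          have hpv : ¬ G.Adj p v := hpC v hvM₂ hva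
          by_cases hpM : p ∈ M
          · by_cases hpw : p = w
            · exact hpv (by rw [hpw]; exact hwv)
            · have hpM₂ : p ∈ M₂ := memOfDiffEq hB2 hpM hpw
              exact hpa.ne (hpB hpM₂)
          · rcases hM.1 p with h | ⟨y, hyM, hpy⟩
            · exact hpM h
            · by_cases hyw : y = w
              · rw [hyw] at hpy
                exact h3 w a p hwa hpa.symm hpy
              · have hyM₂ : y ∈ M₂ := memOfDiffEq hB2 hyM hyw
                have hya : y ≠ a := fun h => haM (h ▸ hyM)
                exact hpC y hyM₂ hya hpy
    -- Step 2: M₁ ⊆ M₂, then minimality of M₂ is violated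
    have hsub : M₁ ⊆ M₂ := by
      intro x hx
      by_cases hxM : x ∈ M
      · have hxw : x ≠ w := fun h => hwM₁ (h ▸ hx)
        exact memOfDiffEq hB2 hxM hxw
      · have : x ∈ M₁ \ M := ⟨hx, hxM⟩
        rw [hA1] at this
        exact this ▸ hvM₂
    obtain ⟨d, hd2, hd1⟩ := Set.exists_of_ssubset (hsub.ssubset_of_ne h12)
    have hdv : d ≠ v := fun h => hd1 (h ▸ hv1.1)
    have hsub' : M₁ ⊆ M₂ \ {d} := by
      intro x hx
      exact ⟨hsub hx, fun h => hd1 (h ▸ hx)⟩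
    exact hM₂.2 d hd2 (domMono hM₁.1 hsub')

end helpers

/-- Both neighbours of removal type, removing the same vertex `w`. -/
lemma bbSameAux (h3 : ∀ a b c : V, G.Adj a b → G.Adj b c → ¬ G.Adj c a)
    {M M₁ M₂ : Set V} {v w a : V}
    (hM : IsMinDomSet G M) (hM₁ : IsMinDomSet G M₁) (hM₂ : IsMinDomSet G M₂)
    (hB1 : M \ M₁ = {w}) (hAs1 : M₁ \ M ⊆ G.neighborSet w)
    (hB2 : M \ M₂ = {w}) (hAs2 : M₂ \ M ⊆ G.neighborSet w)
    (hv1 : v ∈ M₁ \ M) (hv2 : v ∈ M₂ \ M)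
    (ha1 : a ∈ M₁) (ha2 : a ∉ M₂) : False := by
  have hw1 : w ∈ M ∧ w ∉ M₁ := selfOfDiffEq hB1
  have hw2 : w ∈ M ∧ w ∉ M₂ := selfOfDiffEq hB2
  have hwv : G.Adj w v := hAs2 hv2
  -- a ∉ M
  have haM : a ∉ M := by
    intro haM
    have : a ∈ M \ M₂ := ⟨haM, ha2⟩
    rw [hB2] at this
    exact hw1.2 (this ▸ ha1)
  have hwa : G.Adj w a := hAs1 ⟨ha1, haM⟩
  -- M₂ dominates a
  rcases hM₂.1 a with h | ⟨x, hxM₂, hax⟩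
  · exact ha2 h
  · by_cases hxM : x ∈ M
    · -- x ∈ M ∩ M₂, so x ≠ w and x ∈ M₁
      have hxw : x ≠ w := fun h => hw2.2 (h ▸ hxM₂)
      have hxM₁ : x ∈ M₁ := memOfDiffEq hB1 hxM hxw
      obtain ⟨p, hpN, hpB, hpC⟩ := privVert hM₁ ha1
      have hxa : x ≠ a := fun h => haM (h ▸ hxM)
      have hpx : ¬ G.Adj p x := hpC x hxM₁ hxa
      have hpa : G.Adj p a := by
        rcases hpN with h | h
        · exact absurd (show G.Adj p x by rw [h]; exact hax) hpx
        · exact h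
      have hva : v ≠ a := fun h => ha2 (h ▸ hv2.1)
      have hpv : ¬ G.Adj p v := hpC v hv1.1 hva
      by_cases hpM : p ∈ M
      · by_cases hpw : p = w
        · exact hpv (by rw [hpw]; exact hwv)
        · have hpM₁ : p ∈ M₁ := memOfDiffEq hB1 hpM hpw
          exact hpa.ne (hpB hpM₁)
      · rcases hM.1 p with h | ⟨y, hyM, hpy⟩
        · exact hpM h
        · by_cases hyw : y = w
          · rw [hyw] at hpy
            exact h3 w a p hwa hpa.symm hpy
          · have hyM₁ : y ∈ M₁ := memOfDiffEq hB1 hyM hyw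
            have hya : y ≠ a := fun h => haM (h ▸ hyM)
            exact hpC y hyM₁ hya hpy
    · -- x ∈ M₂ \ M : triangle w a x
      have hwx : G.Adj w x := hAs2 ⟨hxM₂, hxM⟩
      exact h3 w a x hwa hax hwx.symm

/-- Both neighbours of removal type, removing distinct vertices. -/
lemma bbDiffAux (h3 : ∀ a b c : V, G.Adj a b → G.Adj b c → ¬ G.Adj c a)
    (h4 : ∀ a b c d : V, G.Adj a b → G.Adj b c → G.Adj c d → G.Adj d a → a = c ∨ b = d)
    {M M₁ M₂ : Set V} {v w₁ w₂ : V}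
    (hM : IsMinDomSet G M) (hM₁ : IsMinDomSet G M₁) (hM₂ : IsMinDomSet G M₂)
    (hB1 : M \ M₁ = {w₁}) (hAs1 : M₁ \ M ⊆ G.neighborSet w₁)
    (hB2 : M \ M₂ = {w₂}) (hAs2 : M₂ \ M ⊆ G.neighborSet w₂)
    (hv1 : v ∈ M₁ \ M) (hv2 : v ∈ M₂ \ M) (hww : w₁ ≠ w₂) : False := by
  have hw1 : w₁ ∈ M ∧ w₁ ∉ M₁ := selfOfDiffEq hB1
  have hw2 : w₂ ∈ M ∧ w₂ ∉ M₂ := selfOfDiffEq hB2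
  have hw1v : G.Adj w₁ v := hAs1 hv1
  have hw2v : G.Adj w₂ v := hAs2 hv2
  have hw1M₂ : w₁ ∈ M₂ := memOfDiffEq hB2 hw1.1 hww
  have hw2M₁ : w₂ ∈ M₁ := memOfDiffEq hB1 hw2.1 (Ne.symm hww)
  have hvM : v ∉ M := hv1.2
  -- Step 1: private vertex r of w₁ in M₂
  obtain ⟨r, hrN, hrB, hrC⟩ := privVert hM₂ hw1M₂
  have hvw₁ : v ≠ w₁ := fun h => hvM (h ▸ hw1.1)
  have hrv : ¬ G.Adj r v := hrC v hv2.1 hvw₁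
  have hrnev : r ≠ v := by
    intro h
    have : r ∈ M₂ := by rw [h]; exact hv2.1
    exact hvw₁ (by rw [← h]; exact hrB this)
  have hrw₁ : G.Adj r w₁ := by
    rcases hrN with h | h
    · exact absurd (show G.Adj r v by rw [h]; exact hw1v) hrv
    · exact h
  -- r's only possible M-neighbour is w₁, and r ∉ M
  have hronly : ∀ y ∈ M, G.Adj r y → y = w₁ := by
    intro y hyM hry
    by_contra hyw₁
    by_cases hyw₂ : y = w₂
    · rw [hyw₂] at hry
      rcases h4 w₁ r w₂ v hrw₁.symm hry hw2v hw1v.symm with h | h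
      · exact hww h
      · exact hrnev h
    · have hyM₂ : y ∈ M₂ := memOfDiffEq hB2 hyM hyw₂
      exact hrC y hyM₂ hyw₁ hry
  have hrM : r ∉ M := by
    intro hrM
    by_cases hrw₂ : r = w₂
    · rw [hrw₂] at hrw₁
      exact h3 w₂ w₁ v hrw₁ hw1v hw2v.symm
    · have hrM₂ : r ∈ M₂ := memOfDiffEq hB2 hrM hrw₂
      exact hrw₁.ne (hrB hrM₂)
  -- M₁ dominates r, forcing r ∈ M₁
  have hrM₁ : r ∈ M₁ := by
    rcases hM₁.1 r with h | ⟨x, hxM₁, hrx⟩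
    · exact h
    · by_cases hxM : x ∈ M
      · exact absurd (hronly x hxM hrx) (fun h => hw1.2 (h ▸ hxM₁))
      · have hw1x : G.Adj w₁ x := hAs1 ⟨hxM₁, hxM⟩
        exact absurd hrw₁ (h3 w₁ x r hw1x hrx.symm)
  -- Step 2: private vertex p of v in M₁
  obtain ⟨p, hpN, hpB, hpC⟩ := privVert hM₁ hv1.1
  have hw2nev : w₂ ≠ v := fun h => hvM (h ▸ hw2.1)
  have hpw₂ : ¬ G.Adj p w₂ := hpC w₂ hw2M₁ hw2nev
  have hpv : G.Adj p v := by
    rcases hpN with h | h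
    · exact absurd (show G.Adj p w₂ by rw [h]; exact hw2v.symm) hpw₂
    · exact h
  have hpr : ¬ G.Adj p r := hpC r hrM₁ hrnev
  by_cases hpM : p ∈ M
  · by_cases hpw₁ : p = w₁
    · exact hpr (by rw [hpw₁]; exact hrw₁.symm)
    · have hpM₁ : p ∈ M₁ := memOfDiffEq hB1 hpM hpw₁
      exact hvM ((hpB hpM₁) ▸ hpM)
  · rcases hM.1 p with h | ⟨y, hyM, hpy⟩
    · exact hpM h
    · by_cases hyw₁ : y = w₁
      · rw [hyw₁] at hpy
        exact h3 v p w₁ hpv.symm hpy hw1v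
      · have hyM₁ : y ∈ M₁ := memOfDiffEq hB1 hyM hyw₁
        have hyv : y ≠ v := fun h => hvM (h ▸ hyM)
        exact hpC y hyM₁ hyv hpy


lemma keyLemma {V : Type*} {G : SimpleGraph V}
    (h3 : ∀ a b c : V, G.Adj a b → G.Adj b c → ¬ G.Adj c a)
    (h4 : ∀ a b c d : V, G.Adj a b → G.Adj b c → G.Adj c d → G.Adj d a → a = c ∨ b = d)
    {M M₁ M₂ : Set V}
    (hM : IsMinDomSet G M) (hM₁ : IsMinDomSet G M₁) (hM₂ : IsMinDomSet G M₂)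
    (h12 : M₁ ≠ M₂)
    (hr1 : ∃ x : V, (M₁ \ M = {x} ∧ M \ M₁ ⊆ G.neighborSet x) ∨
        (M \ M₁ = {x} ∧ M₁ \ M ⊆ G.neighborSet x))
    (hr2 : ∃ x : V, (M₂ \ M = {x} ∧ M \ M₂ ⊆ G.neighborSet x) ∨
        (M \ M₂ = {x} ∧ M₂ \ M ⊆ G.neighborSet x))
    {v : V} (hv1 : v ∈ M₁ \ M) (hv2 : v ∈ M₂ \ M) : False := by
  obtain ⟨x₁, hx₁⟩ := hr1
  obtain ⟨x₂, hx₂⟩ := hr2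
  rcases hx₁ with ⟨hA1, hD1⟩ | ⟨hB1, hAs1⟩
  · -- M₁ of addition type; x₁ = v
    have hx₁v : x₁ = v := by
      have h := hv1
      rw [hA1] at h
      exact (Set.mem_singleton_iff.mp h).symm
    subst hx₁v
    rcases hx₂ with ⟨hA2, hD2⟩ | ⟨hB2, hAs2⟩
    · have hx₂v : x₂ = x₁ := by
        have h := hv2
        rw [hA2] at h
        exact (Set.mem_singleton_iff.mp h).symm
      subst hx₂v
      have hns : ¬ (M₂ ⊆ M₁) ∨ ¬ (M₁ ⊆ M₂) := by
        by_contra h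
        push_neg at h
        exact h12 (subset_antisymm h.2 h.1)
      rcases hns with h | h
      · obtain ⟨d, hd2, hd1⟩ := Set.not_subset.mp h
        exact aaAux h3 h4 hM₁ hM₂ hA1 hA2 hD1 hD2 hd2 hd1
      · obtain ⟨d, hd1, hd2⟩ := Set.not_subset.mp h
        exact aaAux h3 h4 hM₂ hM₁ hA2 hA1 hD2 hD1 hd1 hd2
    · exact abAux h3 h4 hM hM₁ hM₂ h12 hA1 hD1 hB2 hAs2 hv2.1
  · rcases hx₂ with ⟨hA2, hD2⟩ | ⟨hB2, hAs2⟩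
    · have hx₂v : x₂ = v := by
        have h := hv2
        rw [hA2] at h
        exact (Set.mem_singleton_iff.mp h).symm
      subst hx₂v
      exact abAux h3 h4 hM hM₂ hM₁ h12.symm hA2 hD2 hB1 hAs1 hv1.1
    · by_cases hxx : x₁ = x₂
      · subst hxx
        have hns : ¬ (M₁ ⊆ M₂) ∨ ¬ (M₂ ⊆ M₁) := by
          by_contra h
          push_neg at h
          exact h12 (subset_antisymm h.1 h.2)
        rcases hns with h | h
        · obtain ⟨a, ha1, ha2⟩ := Set.not_subset.mp h
          exact bbSameAux h3 hM hM₁ hM₂ hB1 hAs1 hB2 hAs2 hv1 hv2 ha1 ha2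
        · obtain ⟨a, ha2, ha1⟩ := Set.not_subset.mp h
          exact bbSameAux h3 hM hM₂ hM₁ hB2 hAs2 hB1 hAs1 hv2 hv1 ha2 ha1
      · exact bbDiffAux h3 h4 hM hM₁ hM₂ hB1 hAs1 hB2 hAs2 hv1 hv2 hxx


/-- If `G` has `n` vertices and girth at least 5 (no 3-cycles and no 4-cycles), then every
minimal dominating set `M` has degree at most `n − |M|` in `R(G)`; in particular the maximum
degree of `R(G)` is at most `n − γ(G)`. -/
theorem stmt19 {V : Type*} [Fintype V] (G : SimpleGraph V)
    (h3 : ∀ a b c : V, G.Adj a b → G.Adj b c → ¬ G.Adj c a)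
    (h4 : ∀ a b c d : V, G.Adj a b → G.Adj b c → G.Adj c d → G.Adj d a → a = c ∨ b = d) :
    (∀ (M : Set V) (hM : IsMinDomSet G M),
        ((ReconfigGraph G).neighborSet ⟨M, hM⟩).ncard ≤ Fintype.card V - M.ncard) ∧
    (∀ (M : Set V) (hM : IsMinDomSet G M),
        ((ReconfigGraph G).neighborSet ⟨M, hM⟩).ncard ≤
          Fintype.card V - sInf {k : ℕ | ∃ S : Set V, IsDomSet G S ∧ S.ncard = k}) := by
  classical
  have main : ∀ (M : Set V) (hM : IsMinDomSet G M),
      ((ReconfigGraph G).neighborSet ⟨M, hM⟩).ncard ≤ Fintype.card V - M.ncard := by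
    intro M hM
    set s := ((ReconfigGraph G).neighborSet ⟨M, hM⟩) with hs
    have hmem : ∀ N : {S : Set V // IsMinDomSet G S}, N ∈ s →
        (N : Set V) ≠ M ∧ ReconfigAdj G M (N : Set V) := by
      intro N hN
      have h : (ReconfigGraph G).Adj ⟨M, hM⟩ N := hN
      obtain ⟨hne, hadj⟩ := h
      exact ⟨fun h => hne (Subtype.ext h.symm), hadj⟩
    have hnonempty : ∀ N ∈ s, ((N : Set V) \ M).Nonempty := by
      intro N hN
      obtain ⟨hne, hadj⟩ := hmem N hN
      rw [Set.nonempty_iff_ne_empty]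
      intro hemp
      have hsub : (N : Set V) ⊆ M := Set.diff_eq_empty.mp hemp
      obtain ⟨m, hmM, hmN⟩ := Set.exists_of_ssubset (hsub.ssubset_of_ne hne)
      have hsub' : (N : Set V) ⊆ M \ {m} := fun x hx => ⟨hsub hx, fun h => hmN (h ▸ hx)⟩
      exact hM.2 m hmM (domMono N.2.1 hsub')
    rcases Set.eq_empty_or_nonempty s with he | ⟨N₀, hN₀⟩
    · rw [he]
      simp
    · have hV : Nonempty V := ⟨(hnonempty N₀ hN₀).choose⟩
      set f : {S : Set V // IsMinDomSet G S} → V :=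
        fun N => if h : ((N : Set V) \ M).Nonempty then h.choose else Classical.arbitrary V
        with hf
      have hfmem : ∀ N ∈ s, f N ∈ (N : Set V) \ M := by
        intro N hN
        have h := hnonempty N hN
        simp only [hf, dif_pos h]
        exact h.choose_spec
      have hinj : Set.InjOn f s := by
        intro N₁ hN₁ N₂ hN₂ hfe
        by_contra hne
        have h1 := hfmem N₁ hN₁
        have h2 := hfmem N₂ hN₂
        rw [hfe] at h1
        exact keyLemma h3 h4 hM N₁.2 N₂.2 (fun h => hne (Subtype.ext h))
          (hmem N₁ hN₁).2 (hmem N₂ hN₂).2 h1 h2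
      have himg : f '' s ⊆ (Mᶜ : Set V) := by
        rintro _ ⟨N, hN, rfl⟩
        exact (hfmem N hN).2
      calc s.ncard = (f '' s).ncard := (Set.ncard_image_of_injOn hinj).symm
        _ ≤ (Mᶜ : Set V).ncard := Set.ncard_le_ncard himg (Set.toFinite _)
        _ = Fintype.card V - M.ncard := by
            have h := Set.ncard_add_ncard_compl M
            rw [Nat.card_eq_fintype_card] at h
            omega
  refine ⟨main, fun M hM => le_trans (main M hM) (Nat.sub_le_sub_left ?_ _)⟩
  exact Nat.sInf_le ⟨M, hM.1, rfl⟩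
end
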